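/- arXiv:math/0606234 — 6 statements merged into one kernel-verified Lean document; each statement's English description precedes it below -/
import Mathlib

section
/- Let G be a group and let r, s ∈ G be elements that both centralize the commutator subgroup [G,G]. If r² ∈ [G,G], then the commutator [r,s] satisfies [r,s]² = 1. -/
/-!
Write `t = s⁻¹ r s`, so that `[r, s] = r⁻¹ t`. Since `[r, s] ∈ [G, G]`, `r` commutes with `r⁻¹ t`,
hence with `t`; and `t² = s⁻¹ r² s = r²` because `s` centralizes `r² ∈ [G, G]`.
So `(r⁻¹ t)² = r⁻² t² = 1`.
-/

theorem sq_inv_mul_eq_one_of_commute {G : Type*} [Group G] {a b : G} (hab : Commute a b)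
    (hsq : a ^ 2 = b ^ 2) : (a⁻¹ * b) ^ 2 = 1 := by
  rw [hab.inv_left.mul_pow, inv_pow, hsq, inv_mul_cancel]

theorem commute_of_commute_inv_mul {G : Type*} [Group G] {r t : G}
    (h : Commute r (r⁻¹ * t)) : Commute r t := by
  simpa using (Commute.refl r).mul_right h

theorem inv_mul_mul_pow_eq_pow_of_commute {G : Type*} [Group G] {s x : G} (n : ℕ)
    (h : Commute s (x ^ n)) : (s⁻¹ * x * s) ^ n = x ^ n := by
  simpa [mul_assoc, ← h.eq] using conj_pow (a := s⁻¹) (b := x) (i := n)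

theorem commutator_sq_eq_one_of_centralizing
    (G : Type*) [Group G] (r s : G)
    (hr : ∀ x ∈ commutator G, Commute r x)
    (hs : ∀ x ∈ commutator G, Commute s x)
    (hr2 : r ^ 2 ∈ commutator G) :
    (r⁻¹ * s⁻¹ * r * s) ^ 2 = 1 := by
  have hmem : r⁻¹ * s⁻¹ * r * s ∈ commutator G := by
    rw [commutator_def]
    simpa [commutatorElement_def] using
      Subgroup.commutator_mem_commutator (Subgroup.mem_top r⁻¹) (Subgroup.mem_top s⁻¹)
  have hrt : Commute r (s⁻¹ * r * s) :=
    commute_of_commute_inv_mul (by simpa only [mul_assoc] using hr _ hmem)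
  have ht2 : r ^ 2 = (s⁻¹ * r * s) ^ 2 :=
    (inv_mul_mul_pow_eq_pow_of_commute 2 (hs _ hr2)).symm
  simpa only [mul_assoc] using sq_inv_mul_eq_one_of_commute hrt ht2
end

section
/- Let P be a finite 2-group with Ω₁(P) = P whose commutator subgroup P' is cyclic of order at least 4, and let C = C_P(P') be the centralizer of P' in P. Then C has index 2 in P and the commutator subgroup [C,C] of C has order at most 2. -/
open scoped commutatorElement

section IntLemmas

private lemma int_odd_coprime (r : ℕ) (w : ℤ) (hw : Odd w) : IsCoprime ((2:ℤ)^r) w := by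
  obtain ⟨c, rfl⟩ := hw
  exact IsCoprime.pow_left ⟨-c, 1, by ring⟩

private lemma int_bezout (r : ℕ) (w : ℤ) (hw : Odd w) (c : ℤ) :
    ∃ a b : ℤ, a * w + b * 2^r = c := by
  obtain ⟨s, t, hst⟩ := (int_odd_coprime r w hw).symm
  exact ⟨c*s, c*t, by linear_combination c * hst⟩

private lemma int_dvd_cancel (r : ℕ) (w e : ℤ) (hw : Odd w) (h : (2:ℤ)^r ∣ e * w) :
    (2:ℤ)^r ∣ e :=
  (int_odd_coprime r w hw).dvd_of_dvd_mul_right h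

private lemma int_sqrt1 (m : ℕ) (k : ℤ) (hk : Odd k) (h : (2:ℤ)^(m+2) ∣ k*k - 1) :
    (2:ℤ)^(m+1) ∣ k - 1 ∨ (2:ℤ)^(m+1) ∣ k + 1 := by
  obtain ⟨c, rfl⟩ := hk
  have h2 : (2:ℤ)^m ∣ c * (c+1) := by
    have h4 : (2:ℤ)^(m+2) = 4 * 2^m := by ring
    have h5 : (2*c+1)*(2*c+1) - 1 = 4 * (c * (c+1)) := by ring
    rw [h4, h5] at h
    exact (mul_dvd_mul_iff_left (by norm_num : (4:ℤ) ≠ 0)).mp h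
  rcases Int.even_or_odd c with hc | hc
  · left
    obtain ⟨d, hd⟩ := (int_odd_coprime m (c+1) (hc.add_one)).dvd_of_dvd_mul_right h2
    exact ⟨d, by rw [hd]; ring⟩
  · right
    have h3 : (2:ℤ)^m ∣ (c+1) * c := by rwa [mul_comm] at h2
    obtain ⟨d, hd⟩ := (int_odd_coprime m c hc).dvd_of_dvd_mul_right h3
    exact ⟨d, by rw [show (2:ℤ)*c+1+1 = 2*(c+1) from by ring, hd]; ring⟩

private lemma int_lift (m : ℕ) (a : ℤ) (h : (2:ℤ)^(m+1) ∣ a) :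
    (2:ℤ)^(m+2) ∣ a ∨ (2:ℤ)^(m+2) ∣ a - 2^(m+1) := by
  obtain ⟨d, rfl⟩ := h
  rcases Int.even_or_odd d with ⟨e, rfl⟩ | ⟨e, rfl⟩
  · left; exact ⟨e, by ring⟩
  · right; exact ⟨e, by ring⟩

end IntLemmas


section GroupLemmas

variable {G : Type*} [Group G]

private lemma comm_mul_left (a b c : G) : ⁅a * b, c⁆ = a * ⁅b, c⁆ * a⁻¹ * ⁅a, c⁆ := by
  simp only [commutatorElement_def]; group

private lemma comm_aux1 (a c m : G) (hmc : Commute m c) :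
    ⁅a * m, c⁆ = ⁅a, c⁆ := by
  rw [comm_mul_left, hmc.commutator_eq]
  simp

private lemma comm_aux2 (a c m : G) (hma : Commute m a) :
    ⁅a, c * m⁆ = ⁅a, c⁆ := by
  rw [← commutatorElement_inv, comm_aux1 c a m hma, commutatorElement_inv]

private lemma comm_aux (a b m m' : G) (h1 : Commute m b) (h2 : Commute m m')
    (h3 : Commute m' a) :
    ⁅a * m, b * m'⁆ = ⁅a, b⁆ := by
  rw [comm_aux1 a (b * m') m (h1.mul_right h2), comm_aux2 a b m' h3]

private lemma conj_comm_inv (t x : G) (ht : t * t = 1) :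
    t⁻¹ * ⁅x, t⁆ * t = ⁅x, t⁆⁻¹ := by
  have hti : t⁻¹ = t := inv_eq_of_mul_eq_one_right ht
  have h1 : t⁻¹ * ⁅x, t⁆ * t = t⁻¹ * x * t * x⁻¹ := by
    simp only [commutatorElement_def]; group
  have h2 : ⁅x, t⁆⁻¹ = t * x * t⁻¹ * x⁻¹ := by
    simp only [commutatorElement_def, mul_inv_rev, inv_inv]; group
  rw [h1, h2, hti]

private lemma conj_eq_mul_comm (t x : G) : t⁻¹ * x * t = x * ⁅x⁻¹, t⁻¹⁆ := by
  simp only [commutatorElement_def, inv_inv]; group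

private lemma conj_commutator (t x y : G) :
    t⁻¹ * ⁅x, y⁆ * t = ⁅t⁻¹ * x * t, t⁻¹ * y * t⁆ := by
  simp only [commutatorElement_def]; group

private lemma conj_conj_zpow (x b : G) (e : ℤ) : (x⁻¹ * b * x) ^ e = x⁻¹ * b ^ e * x := by
  simpa using conj_zpow (i := e) (a := x⁻¹) (b := b)

end GroupLemmas

/-- `Ω₁(G)`: the subgroup generated by the elements of order `p` of `G`. -/
def Omega1 (p : ℕ) (G : Type*) [Group G] : Subgroup G :=
  Subgroup.closure {x : G | orderOf x = p}

theorem centralizer_of_commutator_index_two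
    (P : Type*) [Group P] [Finite P] (hPp : IsPGroup 2 P)
    (homega : Omega1 2 P = ⊤)
    (hcyc : IsCyclic ↥(commutator P))
    (hcard : 4 ≤ Nat.card ↥(commutator P)) :
    (Subgroup.centralizer (commutator P : Set P)).index = 2 ∧
      Nat.card ↥(commutator ↥(Subgroup.centralizer (commutator P : Set P))) ≤ 2 := by
  haveI : Fact (Nat.Prime 2) := ⟨Nat.prime_two⟩
  -- the order of the commutator subgroup is 2^(m+2)
  obtain ⟨n, hn⟩ := IsPGroup.iff_card.mp (hPp.to_subgroup (commutator P))
  obtain ⟨m, rfl⟩ : ∃ m, n = m + 2 := by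
    refine ⟨n - 2, ?_⟩
    rcases n with _ | _ | n
    · rw [hn] at hcard; norm_num at hcard
    · rw [hn] at hcard; norm_num at hcard
    · omega
  -- a generator g of the commutator subgroup
  obtain ⟨g₀, hg₀⟩ := hcyc.exists_generator
  set g : P := (g₀ : P) with hgdef
  have hgN : g ∈ commutator P := g₀.2
  have hog : orderOf g = 2^(m+2) := by
    have h1 : orderOf (((commutator P).subtype) g₀) = orderOf g₀ :=
      orderOf_injective (commutator P).subtype (commutator P).subtype_injective g₀
    have h2 : orderOf g₀ = Nat.card ↥(commutator P) :=
      orderOf_eq_card_of_forall_mem_zpowers hg₀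
    simpa [hgdef, hn] using h1.trans h2
  have hexp : ∀ w ∈ commutator P, ∃ e : ℤ, w = g ^ e := by
    intro w hw
    obtain ⟨e, he⟩ := hg₀ ⟨w, hw⟩
    refine ⟨e, ?_⟩
    have := congrArg (Subtype.val) he
    simpa [hgdef] using this.symm
  -- exponent arithmetic dictionary
  have hgg : ∀ a b : ℤ, g ^ a = g ^ b ↔ (2:ℤ)^(m+2) ∣ b - a := by
    intro a b
    rw [zpow_eq_zpow_iff_modEq, hog, Int.modEq_iff_dvd]
    norm_cast
  have hQ4 : (4:ℤ) ≤ 2^(m+2) := by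
    calc (4:ℤ) = 2^2 := by norm_num
    _ ≤ 2^(m+2) := pow_le_pow_right₀ (by norm_num) (by omega)
  have hgQ : g ^ ((2:ℤ)^(m+2)) = 1 := by
    have : g ^ ((2:ℤ)^(m+2)) = g ^ ((0:ℤ)) := by
      rw [hgg]; simp
    simpa using this
  -- conjugation sends g to a power of g
  have hconj : ∀ x : P, ∃ k : ℤ, x⁻¹ * g * x = g ^ k := by
    intro x
    have hmem : x⁻¹ * g * x ∈ commutator P := by
      have := (Subgroup.commutator_normal (⊤ : Subgroup P) ⊤).conj_mem g hgN x⁻¹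
      simpa [mul_assoc, commutator] using this
    obtain ⟨e, he⟩ := hexp _ hmem
    exact ⟨e, he⟩
  -- conjugation powers
  have hcpow : ∀ (x b : P) (e : ℤ), x⁻¹ * b ^ e * x = (x⁻¹ * b * x) ^ e := by
    intro x b e; rw [conj_conj_zpow]
  -- conjugation exponents are odd
  have hodd : ∀ (x : P) (k : ℤ), x⁻¹ * g * x = g ^ k → Odd k := by
    intro x k hk
    rcases Int.even_or_odd k with ⟨c, rfl⟩ | h
    · exfalso
      have h1 : (x⁻¹ * g * x) ^ ((2:ℤ)^(m+1)) = x⁻¹ * g ^ ((2:ℤ)^(m+1)) * x := by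
        rw [hcpow]
      have h2 : (g ^ (c+c : ℤ)) ^ ((2:ℤ)^(m+1)) = 1 := by
        rw [← zpow_mul, show ((c+c) * 2^(m+1) : ℤ) = 2^(m+2) * c from by ring, zpow_mul, hgQ,
          one_zpow]
      have h3 : g ^ ((2:ℤ)^(m+1)) ≠ 1 := by
        intro h
        have : g ^ ((2:ℤ)^(m+1)) = g ^ (0:ℤ) := by simpa using h
        rw [hgg] at this
        have h5 : (2:ℤ)^(m+2) ∣ 2^(m+1) := by simpa using this
        have h6 := Int.le_of_dvd (by positivity) h5
        have h7 : (2:ℤ)^(m+2) = 2 * 2^(m+1) := by ring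
        have h8 : (0:ℤ) < 2^(m+1) := by positivity
        rw [h7] at h6; linarith
      apply h3
      have := h1.symm.trans (by rw [hk, h2])
      -- this : x⁻¹ * g ^ ((2:ℤ)^(m+1)) * x = 1
      have h9 : g ^ ((2:ℤ)^(m+1)) = x * 1 * x⁻¹ := by
        rw [← this]; group
      simpa using h9
    · exact h
  -- the central involution z
  set z : P := g ^ ((2:ℤ)^(m+1)) with hzdef
  have hz1 : z ≠ 1 := by
    intro h
    have : g ^ ((2:ℤ)^(m+1)) = g ^ (0:ℤ) := by rw [← hzdef, h]; simp
    rw [hgg] at this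
    have h5 : (2:ℤ)^(m+2) ∣ 2^(m+1) := by simpa using this
    have h6 := Int.le_of_dvd (by positivity) h5
    have h7 : (2:ℤ)^(m+2) = 2 * 2^(m+1) := by ring
    have h8 : (0:ℤ) < 2^(m+1) := by positivity
    rw [h7] at h6; linarith
  have hz2 : z * z = 1 := by
    rw [hzdef, ← zpow_add, show ((2:ℤ)^(m+1) + 2^(m+1)) = 2^(m+2) from by ring, hgQ]
  have hzc : ∀ v : P, Commute v z := by
    intro v
    obtain ⟨k, hk⟩ := hconj v
    obtain ⟨c, hc⟩ := hodd v k hk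
    have h1 : v⁻¹ * z * v = z := by
      rw [hzdef, hcpow, hk, ← zpow_mul]
      rw [show (k * 2^(m+1) : ℤ) = 2^(m+1) + 2^(m+2) * c from by rw [hc]; ring]
      rw [zpow_add, zpow_mul, hgQ, one_zpow, mul_one]
    show v * z = z * v
    conv_lhs => rw [← h1]
    group
  -- every x ∈ closure of involutions
  have hcl : ∀ x : P, x ∈ Subgroup.closure {y : P | orderOf y = 2} := by
    intro x
    have : x ∈ Omega1 2 P := by rw [homega]; exact Subgroup.mem_top x
    exact this
  -- squares lie in the commutator subgroup
  have habel : ∀ x : P, x * x ∈ commutator P := by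
    have key : ∀ x : P, (Abelianization.of (G := P)) x ^ 2 = 1 := by
      intro x
      have hle : Subgroup.closure {y : P | orderOf y = 2} ≤
          Subgroup.comap (Abelianization.of (G := P)) ((powMonoidHom 2 : Abelianization P →* Abelianization P).ker) := by
        rw [Subgroup.closure_le]
        intro y hy
        have hy2 : y ^ 2 = 1 := by
          have := pow_orderOf_eq_one y
          rwa [hy] at this
        simp only [Set.mem_setOf_eq, SetLike.mem_coe, Subgroup.mem_comap, MonoidHom.mem_ker,
          powMonoidHom_apply]
        rw [← map_pow, hy2, map_one]
      have := hle (hcl x)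
      simpa [Subgroup.mem_comap, MonoidHom.mem_ker, powMonoidHom_apply] using this
    intro x
    have h1 := key x
    rw [pow_two, ← map_mul] at h1
    exact (QuotientGroup.eq_one_iff _).mp h1
  have hsq : ∀ x : P, ∃ e : ℤ, x * x = g ^ e := fun x => hexp _ (habel x)
  have hmemc : ∀ x y : P, ⁅x, y⁆ ∈ commutator P := fun x y =>
    Subgroup.commutator_mem_commutator (Subgroup.mem_top x) (Subgroup.mem_top y)
  -- there is an element not commuting with g
  have hstep1 : ∃ t : P, t⁻¹ * g * t ≠ g := by
    by_contra hcon
    push_neg at hcon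
    have hcen : ∀ (v w : P), w ∈ commutator P → v * w = w * v := by
      intro v w hw
      obtain ⟨e, rfl⟩ := hexp w hw
      have hvg : Commute v g := by
        show v * g = g * v
        conv_lhs => rw [← hcon v]
        group
      exact (hvg.zpow_right e).eq
    have hbil : ∀ a b y : P, ⁅a * b, y⁆ = ⁅b, y⁆ * ⁅a, y⁆ := by
      intro a b y
      rw [comm_mul_left]
      have h2 : a * ⁅b, y⁆ * a⁻¹ = ⁅b, y⁆ := by
        rw [mul_assoc, ← hcen a⁻¹ ⁅b, y⁆ (hmemc b y), mul_inv_cancel_left]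
      rw [h2]
    -- every commutator squares to 1
    have hsq2 : ∀ x y : P, ⁅x, y⁆ * ⁅x, y⁆ = 1 := by
      intro x y
      induction hcl x using Subgroup.closure_induction with
      | mem t ht =>
        have ht2 : t * t = 1 := by
          have := pow_orderOf_eq_one t
          rw [ht, pow_two] at this
          exact this
        have := hbil t t y
        rw [ht2] at this
        simp only [commutatorElement_one_left] at this
        exact this.symm
      | one => simp
      | mul u v hu hv ihu ihv =>
        have h3 := hbil u v y
        rw [h3]
        have hcm : ⁅u, y⁆ * ⁅v, y⁆ = ⁅v, y⁆ * ⁅u, y⁆ :=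
          (hcen ⁅u,y⁆ ⁅v,y⁆ (hmemc v y)).symm ▸ hcen ⁅u,y⁆ ⁅v,y⁆ (hmemc v y)
        calc ⁅v, y⁆ * ⁅u, y⁆ * (⁅v, y⁆ * ⁅u, y⁆)
            = ⁅v, y⁆ * (⁅u, y⁆ * ⁅v, y⁆) * ⁅u, y⁆ := by group
          _ = ⁅v, y⁆ * (⁅v, y⁆ * ⁅u, y⁆) * ⁅u, y⁆ := by
              rw [hcen ⁅u,y⁆ ⁅v,y⁆ (hmemc v y)]
          _ = (⁅v, y⁆ * ⁅v, y⁆) * (⁅u, y⁆ * ⁅u, y⁆) := by group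
          _ = 1 := by rw [ihu, ihv, one_mul]
      | inv u hu ihu =>
        have h4 : ⁅u⁻¹, y⁆ = ⁅u, y⁆⁻¹ := by
          have := hbil u⁻¹ u y
          simp only [inv_mul_cancel, commutatorElement_one_left] at this
          exact (inv_eq_of_mul_eq_one_right this.symm).symm
        rw [h4, ← mul_inv_rev, ihu, inv_one]
    -- hence g * g = 1, contradiction
    have hTle : commutator P ≤
        { carrier := {w : P | w ∈ commutator P ∧ w * w = 1}
          one_mem' := ⟨Subgroup.one_mem _, one_mul 1⟩
          mul_mem' := by
            rintro u v ⟨hu1, hu2⟩ ⟨hv1, hv2⟩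
            refine ⟨Subgroup.mul_mem _ hu1 hv1, ?_⟩
            have hc := hcen v u hu1
            calc (u*v)*(u*v) = u*(v*u)*v := by group
              _ = u*(u*v)*v := by rw [hc]
              _ = (u*u)*(v*v) := by group
              _ = 1 := by rw [hu2, hv2, one_mul]
          inv_mem' := by
            rintro u ⟨h1, h2⟩
            exact ⟨Subgroup.inv_mem _ h1, by rw [← mul_inv_rev, h2, inv_one]⟩ } := by
      exact Subgroup.commutator_le.mpr fun p _ q _ => ⟨hmemc p q, hsq2 p q⟩
    have hgg1 : g * g = 1 := (hTle hgN).2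
    have : g ^ (2:ℤ) = g ^ (0:ℤ) := by
      have h7 : g ^ (2:ℤ) = g * g := by
        rw [show (2:ℤ) = 1 + 1 from rfl, zpow_add, zpow_one]
      rw [h7, hgg1]; simp
    rw [hgg] at this
    rw [show (0:ℤ) - 2 = -2 from by ring] at this
    have h6 := Int.le_of_dvd (by norm_num : (0:ℤ) < 2) (dvd_neg.mp this)
    linarith
  -- size contradiction helper
  have hsize : ¬ ((2:ℤ)^(m+2) ∣ 2^(m+1)) := by
    intro h5
    have h6 := Int.le_of_dvd (by positivity) h5
    have h7 : (2:ℤ)^(m+2) = 2 * 2^(m+1) := by ring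
    have h8 : (0:ℤ) < 2^(m+1) := by positivity
    rw [h7] at h6; linarith
  -- no element can act on g by the exponent 1 + 2^(m+1) when m ≥ 1
  have hJEX : ∀ y : P, 1 ≤ m → y⁻¹ * g * y = g ^ ((1:ℤ) + 2^(m+1)) → False := by
    intro y hm hy
    set J : ℤ := (1:ℤ) + 2^(m+1) with hJdef
    obtain ⟨m', rfl⟩ : ∃ m', m = m' + 1 := ⟨m - 1, by omega⟩
    have hoddu : Odd ((1:ℤ) + 2^(m'+1)) := ⟨2^m', by ring⟩
    -- y * y = g ^ e with e even
    obtain ⟨e, he⟩ := hsq y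
    have heven : ∃ d : ℤ, e = 2 * d := by
      have h1 : y⁻¹ * (g ^ e) * y = g ^ e := by
        rw [← he]; group
      rw [hcpow, hy, ← zpow_mul] at h1
      rw [hgg] at h1
      have h2 : e - J * e = -(e * 2^(m'+2)) := by rw [hJdef]; ring
      rw [h2, dvd_neg] at h1
      obtain ⟨d, hd⟩ := h1
      refine ⟨d, ?_⟩
      have h3 : e * 2^(m'+2) = (2*d) * 2^(m'+2) := by rw [hd]; ring
      exact mul_right_cancel₀ (by positivity) h3
    obtain ⟨d, hd⟩ := heven
    -- adjust y by a power of g to get an involution t acting the same way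
    obtain ⟨a, b, hab⟩ := int_bezout (m'+2) ((1:ℤ) + 2^(m'+1)) hoddu (-d)
    set t : P := y * g ^ (a : ℤ) with htdef
    have ht2 : t * t = 1 := by
      have h1 : t * t = (y * y) * (y⁻¹ * g^(a:ℤ) * y) * g^(a:ℤ) := by
        rw [htdef]; group
      rw [he, hcpow, hy, ← zpow_mul, ← zpow_add, ← zpow_add] at h1
      have h2 : e + J * a + a = 2^(m'+3) * (-b) := by
        rw [hJdef, hd]
        linear_combination 2 * hab
      rw [h1, h2, show (m'+3) = (m'+1)+2 from by ring, zpow_mul, hgQ, one_zpow]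
    have ht : t⁻¹ * g * t = g ^ J := by
      have h1 : t⁻¹ * g * t = (g^(a:ℤ))⁻¹ * (y⁻¹ * g * y) * g^(a:ℤ) := by
        rw [htdef]; group
      rw [hy, ← zpow_neg, ← zpow_add, ← zpow_add] at h1
      rw [h1, show (-a + J + a : ℤ) = J from by ring]
    have hti : t⁻¹ = t := inv_eq_of_mul_eq_one_right ht2
    -- commutators with t are powers of z
    have hzt : ∀ x : P, ∃ c : ℤ, ⁅x, t⁆ = z ^ (c : ℤ) := by
      intro x
      obtain ⟨w, hw⟩ := hexp ⁅x, t⁆ (hmemc x t)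
      have h5 := conj_comm_inv t x ht2
      rw [hw, hcpow, ht, ← zpow_mul, ← zpow_neg] at h5
      rw [hgg] at h5
      have h6 : -w - J * w = -(w * (1 + 2^(m'+1)) * 2) := by rw [hJdef]; ring
      rw [h6, dvd_neg, show ((2:ℤ)^(m'+1+2)) = 2^(m'+2) * 2 from by ring] at h5
      have h7 : (2:ℤ)^(m'+2) ∣ w * (1 + 2^(m'+1)) :=
        (mul_dvd_mul_iff_right (by norm_num : (2:ℤ) ≠ 0)).mp h5
      have h8 : (2:ℤ)^(m'+2) ∣ w := int_dvd_cancel _ _ _ hoddu h7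
      obtain ⟨c, hc⟩ := h8
      refine ⟨c, ?_⟩
      rw [hw, hc, hzdef, ← zpow_mul]
    -- t fixes every commutator, hence centralizes the whole commutator subgroup
    have hfix : ∀ x x' : P, t⁻¹ * ⁅x, x'⁆ * t = ⁅x, x'⁆ := by
      intro x x'
      rw [conj_commutator t x x', conj_eq_mul_comm t x, conj_eq_mul_comm t x']
      obtain ⟨c1, hc1⟩ := hzt x⁻¹
      obtain ⟨c2, hc2⟩ := hzt x'⁻¹
      rw [hti, hc1, hc2]
      exact comm_aux x x' (z^c1) (z^c2) ((hzc x').zpow_right c1).symm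
        (((hzc (z^c2)).zpow_right c1).symm) (((hzc x).zpow_right c2).symm)
    have hle : commutator P ≤ Subgroup.centralizer {t} := by
      rw [commutator_eq_closure, Subgroup.closure_le]
      rintro w ⟨p, q, rfl⟩
      have h9 : t * ⁅p, q⁆ = ⁅p, q⁆ * t := by
        conv_lhs => rw [← hfix p q]
        group
      exact Subgroup.mem_centralizer_iff.mpr fun h hh => by
        rw [Set.mem_singleton_iff] at hh; rw [hh]; exact h9
    have hgt : t * g = g * t := Subgroup.mem_centralizer_iff.mp (hle hgN) t rfl
    have h10 : t⁻¹ * g * t = g := by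
      rw [mul_assoc, ← hgt, ← mul_assoc, inv_mul_cancel, one_mul]
    have h11 : g ^ J = g ^ (1:ℤ) := by rw [← ht, h10, zpow_one]
    rw [hgg] at h11
    have h12 : (1:ℤ) - J = -(2^(m'+2)) := by rw [hJdef]; ring
    rw [h12, dvd_neg] at h11
    exact hsize h11
  -- classification: every conjugation exponent is ≡ 1, -1, or 2^(m+1)-1 mod 2^(m+2)
  have hclass : ∀ x : P, ∃ k : ℤ, x⁻¹ * g * x = g ^ k ∧
      ((2:ℤ)^(m+2) ∣ k - 1 ∨ (2:ℤ)^(m+2) ∣ k + 1 ∨ (2:ℤ)^(m+2) ∣ k - (2^(m+1) - 1)) := by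
    intro x
    induction hcl x using Subgroup.closure_induction with
    | mem t ht =>
      obtain ⟨k, hk⟩ := hconj t
      have hko := hodd t k hk
      have ht2 : t * t = 1 := by
        have := pow_orderOf_eq_one t
        rwa [ht, pow_two] at this
      have hkk : (2:ℤ)^(m+2) ∣ k * k - 1 := by
        have h1 : t⁻¹ * (t⁻¹ * g * t) * t = g := by
          have h2 : t⁻¹ * (t⁻¹ * g * t) * t = (t*t)⁻¹ * g * (t*t) := by group
          rw [h2, ht2]; simp
        rw [hk, hcpow, hk, ← zpow_mul] at h1
        have h3 : g ^ (k*k) = g ^ (1:ℤ) := by rw [h1, zpow_one]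
        rw [hgg] at h3
        have := dvd_neg.mpr h3
        simpa using this
      refine ⟨k, hk, ?_⟩
      rcases int_sqrt1 m k hko hkk with h | h
      · rcases int_lift m (k-1) h with h' | h'
        · exact Or.inl h'
        · -- k ≡ 1 + 2^(m+1)
          rcases Nat.eq_zero_or_pos m with rfl | hm
          · right; left
            have h4 : (2:ℤ)^(0+2) = 4 := by norm_num
            rw [h4] at h' ⊢
            have h5 : k - 1 - 2^(0+1) = k - 3 := by ring
            rw [h5] at h'
            omega
          · exfalso
            refine hJEX t hm ?_
            rw [hk]
            rw [hgg]
            have h6 : (1 + 2^(m+1)) - k = -(k - 1 - 2^(m+1)) := by ring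
            rw [h6, dvd_neg]
            exact h'
      · rcases int_lift m (k+1) h with h' | h'
        · exact Or.inr (Or.inl h')
        · right; right
          have h7 : k - (2^(m+1) - 1) = k + 1 - 2^(m+1) := by ring
          rw [h7]; exact h'
    | one => exact ⟨1, by simp, Or.inl (by simp)⟩
    | mul u v hu hv ihu ihv =>
      obtain ⟨k, hk, cu⟩ := ihu
      obtain ⟨k', hk', cv⟩ := ihv
      have hprod : (u*v)⁻¹ * g * (u*v) = g ^ (k * k') := by
        have h1 : (u*v)⁻¹ * g * (u*v) = v⁻¹ * (u⁻¹ * g * u) * v := by group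
        rw [h1, hk, hcpow, hk', ← zpow_mul, mul_comm]
      refine ⟨k * k', hprod, ?_⟩
      rcases cu with h | h | h
      · -- k ≡ 1 : inherit k'
        rcases cv with h' | h' | h'
        · exact Or.inl (by
            have e : k*k' - 1 = (k-1)*k' + (k'-1) := by ring
            rw [e]; exact dvd_add (h.mul_right _) h')
        · exact Or.inr (Or.inl (by
            have e : k*k' + 1 = (k-1)*k' + (k'+1) := by ring
            rw [e]; exact dvd_add (h.mul_right _) h'))
        · exact Or.inr (Or.inr (by
            have e : k*k' - (2^(m+1)-1) = (k-1)*k' + (k' - (2^(m+1)-1)) := by ring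
            rw [e]; exact dvd_add (h.mul_right _) h'))
      · rcases cv with h' | h' | h'
        · exact Or.inr (Or.inl (by
            have e : k*k' + 1 = (k'-1)*k + (k+1) := by ring
            rw [e]; exact dvd_add (h'.mul_right _) h))
        · exact Or.inl (by
            have e : k*k' - 1 = (k+1)*k' - (k'+1) := by ring
            rw [e]; exact dvd_sub (h.mul_right _) h')
        · -- (-1)·(-j) ≡ j : excluded (or m = 0)
          rcases Nat.eq_zero_or_pos m with rfl | hm
          · right; left
            have h4 : (2:ℤ)^(0+2) = 4 := by norm_num
            rw [h4] at h h' ⊢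
            have h5 : k' - (2^(0+1) - 1) = k' - 1 := by ring
            rw [h5] at h'
            have e : k*k' + 1 = (k+1)*k' - (k'-1) := by ring
            rw [e]; exact dvd_sub (h.mul_right _) h'
          · exfalso
            refine hJEX (u*v) hm ?_
            rw [hprod, hgg]
            have e : (1 + 2^(m+1)) - k*k' = -((k+1)*k') + (k' - (2^(m+1)-1)) + 2^(m+2) := by ring
            rw [e]
            exact dvd_add (dvd_add (dvd_neg.mpr (h.mul_right _)) h') dvd_rfl
      · rcases cv with h' | h' | h'
        · exact Or.inr (Or.inr (by
            have e : k*k' - (2^(m+1)-1) = (k'-1)*k + (k - (2^(m+1)-1)) := by ring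
            rw [e]; exact dvd_add (h'.mul_right _) h))
        · rcases Nat.eq_zero_or_pos m with rfl | hm
          · right; left
            have h4 : (2:ℤ)^(0+2) = 4 := by norm_num
            rw [h4] at h h' ⊢
            have h5 : k - (2^(0+1) - 1) = k - 1 := by ring
            rw [h5] at h
            have e : k*k' + 1 = (k'+1)*k - (k-1) := by ring
            rw [e]; exact dvd_sub (h'.mul_right _) h
          · exfalso
            refine hJEX (u*v) hm ?_
            rw [hprod, hgg]
            have e : (1 + 2^(m+1)) - k*k' = -((k'+1)*k) + (k - (2^(m+1)-1)) + 2^(m+2) := by ring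
            rw [e]
            exact dvd_add (dvd_add (dvd_neg.mpr (h'.mul_right _)) h) dvd_rfl
        · exact Or.inl (by
            have e : k*k' - 1 = (k-(2^(m+1)-1))*k' + (2^(m+1)-1)*(k'-(2^(m+1)-1))
              + 2^(m+2)*(2^m - 1) := by ring
            rw [e]
            exact dvd_add (dvd_add (h.mul_right _) (h'.mul_left _)) ⟨2^m - 1, rfl⟩)
    | inv u hu ihu =>
      obtain ⟨k, hk, cu⟩ := ihu
      obtain ⟨k'', hk''⟩ := hconj u⁻¹
      have hrel : (2:ℤ)^(m+2) ∣ k * k'' - 1 := by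
        have h1 : u⁻¹ * (u⁻¹⁻¹ * g * u⁻¹) * u = g := by group
        rw [hk'', hcpow, hk, ← zpow_mul] at h1
        have h3 : g ^ (k*k'') = g ^ (1:ℤ) := by rw [h1, zpow_one]
        rw [hgg] at h3
        have h4 := dvd_neg.mpr h3
        simpa using h4
      refine ⟨k'', hk'', ?_⟩
      rcases cu with h | h | h
      · exact Or.inl (by
          have e : k'' - 1 = (k*k''-1) - (k-1)*k'' := by ring
          rw [e]; exact dvd_sub hrel (h.mul_right _))
      · exact Or.inr (Or.inl (by
          have e : k'' + 1 = -(k*k''-1) + (k+1)*k'' := by ring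
          rw [e]; exact dvd_add (dvd_neg.mpr hrel) (h.mul_right _)))
      · exact Or.inr (Or.inr (by
          have e : k'' - (2^(m+1)-1) = (2^(m+1)-1)*(k*k''-1) - ((2^(m+1)-1)*k'')*(k-(2^(m+1)-1))
            - 2^(m+2)*((2^m-1)*k'') := by ring
          rw [e]
          exact dvd_sub (dvd_sub (hrel.mul_left _) (h.mul_left _)) ⟨(2^m-1)*k'', rfl⟩))
  set C := Subgroup.centralizer (commutator P : Set P) with hCdef
  -- membership in C
  have hCmem : ∀ x : P, x ∈ C ↔ x⁻¹ * g * x = g := by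
    intro x
    constructor
    · intro hx
      have h1 : g * x = x * g := Subgroup.mem_centralizer_iff.mp hx g hgN
      rw [mul_assoc, h1, inv_mul_cancel_left]
    · intro hx
      apply Subgroup.mem_centralizer_iff.mpr
      intro w hw
      obtain ⟨e, rfl⟩ := hexp w hw
      have hcg : Commute x g := by
        show x * g = g * x
        conv_lhs => rw [← hx]
        group
      exact ((hcg.zpow_right e).eq).symm
  have hCg : ∀ x : P, x ∈ C → Commute x g := by
    intro x hx
    show x * g = g * x
    conv_lhs => rw [← (hCmem x).mp hx]
    group
  have hCk : ∀ (x : P) (k : ℤ), x⁻¹ * g * x = g ^ k → (2:ℤ)^(m+2) ∣ k - 1 → x ∈ C := by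
    intro x k hk hdvd
    apply (hCmem x).mpr
    have : g ^ k = g ^ (1:ℤ) := by
      rw [hgg]
      have e : (1:ℤ) - k = -(k-1) := by ring
      rw [e]; exact dvd_neg.mpr hdvd
    rw [hk, this, zpow_one]
  -- an element outside C, with its exponent
  obtain ⟨t0, ht0⟩ := hstep1
  have ht0C : t0 ∉ C := fun h => ht0 ((hCmem t0).mp h)
  obtain ⟨kt, hkt, ckt⟩ := hclass t0
  have ckt' : (2:ℤ)^(m+2) ∣ kt + 1 ∨ (2:ℤ)^(m+2) ∣ kt - (2^(m+1) - 1) := by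
    rcases ckt with h | h | h
    · exact absurd (hCk t0 kt hkt h) ht0C
    · exact Or.inl h
    · exact Or.inr h
  -- conjugation exponent of a product
  have hprod2 : ∀ (x y : P) (kx ky : ℤ), x⁻¹*g*x = g^kx → y⁻¹*g*y = g^ky →
      (x*y)⁻¹ * g * (x*y) = g ^ (kx * ky) := by
    intro x y kx ky hx hy
    have h1 : (x*y)⁻¹ * g * (x*y) = y⁻¹ * (x⁻¹ * g * x) * y := by group
    rw [h1, hx, hcpow, hy, ← zpow_mul, mul_comm]
  -- kt - 1 = 2 * u with u odd
  have hktu : ∃ u : ℤ, kt - 1 = 2 * u ∧ Odd u := by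
    rcases ckt' with h | h
    · obtain ⟨dd, hdd⟩ := h
      exact ⟨2^(m+1)*dd - 1, by linear_combination hdd, ⟨2^m * dd - 1, by ring⟩⟩
    · rcases Nat.eq_zero_or_pos m with rfl | hm
      · exfalso
        apply ht0C
        apply hCk t0 kt hkt
        have e : kt - 1 = kt - (2^(0+1) - 1) := by ring
        rw [e]; exact h
      · obtain ⟨m', rfl⟩ : ∃ m', m = m' + 1 := ⟨m - 1, by omega⟩
        obtain ⟨dd, hdd⟩ := h
        exact ⟨2^(m'+2)*dd + 2^(m'+1) - 1, by linear_combination hdd,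
          ⟨2^(m'+1)*dd + 2^m' - 1, by ring⟩⟩
  -- Goal 1 : index two
  have goal1 : C.index = 2 := by
    apply Subgroup.index_eq_two_iff.mpr
    refine ⟨t0, fun b => ?_⟩
    by_cases hb : b ∈ C
    · refine Or.inr ⟨hb, fun hbt => ?_⟩
      exact ht0C (by
        have : t0 = b⁻¹ * (b * t0) := by group
        rw [this]
        exact Subgroup.mul_mem _ (Subgroup.inv_mem _ hb) hbt)
    · refine Or.inl ⟨?_, hb⟩
      obtain ⟨kb, hkb, ckb⟩ := hclass b
      have ckb' : (2:ℤ)^(m+2) ∣ kb + 1 ∨ (2:ℤ)^(m+2) ∣ kb - (2^(m+1) - 1) := by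
        rcases ckb with h | h | h
        · exact absurd (hCk b kb hkb h) hb
        · exact Or.inl h
        · exact Or.inr h
      have hbt := hprod2 b t0 kb kt hkb hkt
      apply hCk (b*t0) (kb*kt) hbt
      rcases ckb' with h | h <;> rcases ckt' with h' | h'
      · have e : kb*kt - 1 = (kb+1)*kt - (kt+1) := by ring
        rw [e]; exact dvd_sub (h.mul_right _) h'
      · -- kb ≡ -1, kt ≡ v : product ≡ j, impossible (or m = 0 collapse)
        rcases Nat.eq_zero_or_pos m with rfl | hm
        · exfalso
          apply ht0C; apply hCk t0 kt hkt
          have e : kt - 1 = kt - (2^(0+1) - 1) := by ring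
          rw [e]; exact h'
        · exfalso
          refine hJEX (b*t0) hm ?_
          rw [hbt, hgg]
          have e : (1 + 2^(m+1)) - kb*kt = -((kb+1)*kt) + (kt - (2^(m+1)-1)) + 2^(m+2) := by
            ring
          rw [e]
          exact dvd_add (dvd_add (dvd_neg.mpr (h.mul_right _)) h') dvd_rfl
      · rcases Nat.eq_zero_or_pos m with rfl | hm
        · exfalso
          apply hb; apply hCk b kb hkb
          have e : kb - 1 = kb - (2^(0+1) - 1) := by ring
          rw [e]; exact h
        · exfalso
          refine hJEX (b*t0) hm ?_
          rw [hbt, hgg]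
          have e : (1 + 2^(m+1)) - kb*kt = -((kt+1)*kb) + (kb - (2^(m+1)-1)) + 2^(m+2) := by
            ring
          rw [e]
          exact dvd_add (dvd_add (dvd_neg.mpr (h'.mul_right _)) h) dvd_rfl
      · have e : kb*kt - 1 = (kb-(2^(m+1)-1))*kt + (2^(m+1)-1)*(kt-(2^(m+1)-1))
          + 2^(m+2)*(2^m - 1) := by ring
        rw [e]
        exact dvd_add (dvd_add (h.mul_right _) (h'.mul_left _)) ⟨2^m - 1, rfl⟩
  -- Goal 2 : the commutator subgroup of C has order at most 2
  have hle2 : commutator ↥C ≤ Subgroup.comap C.subtype (Subgroup.zpowers z) := by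
    refine Subgroup.commutator_le.mpr fun a _ b _ => ?_
    rw [Subgroup.mem_comap]
    have hab : (C.subtype) ⁅a, b⁆ = ⁅(a:P), (b:P)⁆ := map_commutatorElement _ _ _
    rw [hab]
    obtain ⟨e, he⟩ := hexp ⁅(a:P), (b:P)⁆ (hmemc _ _)
    -- t0 fixes this commutator
    have hfix2 : t0⁻¹ * ⁅(a:P), (b:P)⁆ * t0 = ⁅(a:P), (b:P)⁆ := by
      rw [conj_commutator, conj_eq_mul_comm t0 (a:P), conj_eq_mul_comm t0 (b:P)]
      obtain ⟨i, hi⟩ := hexp ⁅(a:P)⁻¹, t0⁻¹⁆ (hmemc _ _)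
      obtain ⟨i', hi'⟩ := hexp ⁅(b:P)⁻¹, t0⁻¹⁆ (hmemc _ _)
      rw [hi, hi']
      exact comm_aux (a:P) (b:P) (g^i) (g^i')
        (((hCg (b:P) b.2).zpow_right i).symm)
        ((Commute.refl g).zpow_zpow i i')
        (((hCg (a:P) a.2).zpow_right i').symm)
    have hee : g ^ (kt * e) = g ^ e := by
      have h0 := hfix2
      rw [he, hcpow, hkt, ← zpow_mul] at h0
      exact h0
    rw [hgg] at hee
    obtain ⟨u, hu, huo⟩ := hktu
    have h1 : (2:ℤ)^(m+2) ∣ (e*u) * 2 := by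
      have e2 : e - kt * e = -((e*u)*2) := by linear_combination (-e) * hu
      rw [e2, dvd_neg] at hee
      exact hee
    have h2 : (2:ℤ)^(m+1) ∣ e * u := by
      have e3 : (2:ℤ)^(m+2) = 2^(m+1) * 2 := by ring
      rw [e3] at h1
      exact (mul_dvd_mul_iff_right (by norm_num : (2:ℤ) ≠ 0)).mp h1
    obtain ⟨c, hc⟩ := int_dvd_cancel (m+1) u e huo h2
    rw [Subgroup.mem_zpowers_iff]
    exact ⟨c, by rw [hzdef, ← zpow_mul, ← hc, ← he]⟩
  have hzord : orderOf z = 2 := by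
    apply orderOf_eq_prime
    · rw [pow_two]; exact hz2
    · exact hz1
  have goal2 : Nat.card ↥(commutator ↥C) ≤ 2 := by
    have hc1 : Nat.card ↥(commutator ↥C) ≤
        Nat.card ↥(Subgroup.comap C.subtype (Subgroup.zpowers z)) :=
      Subgroup.card_le_of_le hle2
    have hc2 : Nat.card ↥(Subgroup.comap C.subtype (Subgroup.zpowers z)) ≤
        Nat.card ↥(Subgroup.zpowers z) := by
      have hf : Function.Injective
          (fun w : ↥(Subgroup.comap C.subtype (Subgroup.zpowers z)) =>
            (⟨((w : ↥C) : P), w.2⟩ : ↥(Subgroup.zpowers z))) := by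
        intro a b h
        simp only [Subtype.mk.injEq] at h
        exact Subtype.ext (Subtype.ext (by exact congrArg (fun x : ↥(Subgroup.zpowers z) => (x : P)) h))
      exact Nat.card_le_card_of_injective _ hf
    have hc3 : Nat.card ↥(Subgroup.zpowers z) = 2 := by
      rw [Nat.card_zpowers, hzord]
    omega
  exact ⟨goal1, goal2⟩
end

section
/- Let P be a finite 2-group with Ω₁(P) = P whose commutator subgroup P' is cyclic of order at least 4. Let y ∈ C_P(P') be an element with y² = 1. Then the subgroup [P, y] generated by all commutators [g, y] with g ∈ P is contained in Ω₁(P'), the unique subgroup of order 2 of the cyclic group P'. -/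
theorem commutators_with_involution_in_omega_of_derived
    (P : Type*) [Group P] [Finite P] (hPp : IsPGroup 2 P)
    (homega : Omega1 2 P = ⊤)
    (hcyc : IsCyclic ↥(commutator P))
    (hcard : 4 ≤ Nat.card ↥(commutator P))
    (y : P) (hy : y ∈ Subgroup.centralizer (commutator P : Set P))
    (hy2 : y ^ 2 = 1) :
    Subgroup.closure {x : P | ∃ g : P, x = g⁻¹ * y⁻¹ * g * y} ≤
      Subgroup.closure {x : P | x ∈ commutator P ∧ orderOf x = 2} := by
  set Z := Subgroup.closure {x : P | x ∈ commutator P ∧ orderOf x = 2} with hZdef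
  have hyy : y * y = 1 := by rw [← pow_two]; exact hy2
  have hyinv : y⁻¹ = y := inv_eq_of_mul_eq_one_right hyy
  have hcomm : ∀ x ∈ commutator P, x * y = y * x :=
    Subgroup.mem_centralizer_iff.mp hy
  -- normality of Z under conjugation
  have hnorm : ∀ (h : P) {x : P}, x ∈ Z → h⁻¹ * x * h ∈ Z := by
    intro h x hx
    induction hx using Subgroup.closure_induction with
    | mem a ha =>
      apply Subgroup.subset_closure
      constructor
      · have := (Subgroup.commutator_normal (⊤ : Subgroup P) ⊤).conj_mem a ha.1 h⁻¹
        rw [commutator_def]; simpa using this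
      · have : h⁻¹ * a * h = h⁻¹ * a * (h⁻¹)⁻¹ := by group
        rw [this, ← MulAut.conj_apply, (MulAut.conj h⁻¹).orderOf_eq a]
        exact ha.2
    | one => simpa using Subgroup.one_mem Z
    | mul a b _ _ iha ihb =>
      have : h⁻¹ * (a * b) * h = (h⁻¹ * a * h) * (h⁻¹ * b * h) := by group
      rw [this]; exact Subgroup.mul_mem Z iha ihb
    | inv a _ iha =>
      have : h⁻¹ * a⁻¹ * h = (h⁻¹ * a * h)⁻¹ := by group
      rw [this]; exact Subgroup.inv_mem Z iha
  -- commutators are in commutator P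
  have hmemcomm : ∀ g : P, g⁻¹ * y⁻¹ * g * y ∈ commutator P := by
    intro g
    open scoped commutatorElement in
    have : g⁻¹ * y⁻¹ * g * y = ⁅g⁻¹, y⁻¹⁆ := by
      rw [commutatorElement_def]; group
    rw [this, commutator_def]
    exact Subgroup.commutator_mem_commutator (Subgroup.mem_top _) (Subgroup.mem_top _)
  -- the key step
  have key : ∀ g : P, g⁻¹ * y⁻¹ * g * y ∈ Z := by
    intro g
    have hg : g ∈ Omega1 2 P := by rw [homega]; exact Subgroup.mem_top g
    induction hg using Subgroup.closure_induction with
    | mem a ha =>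
      set z := a⁻¹ * y⁻¹ * a * y with hzdef
      have hzc : z ∈ commutator P := hmemcomm a
      have haa : a * a = 1 := by
        have := pow_orderOf_eq_one a
        rwa [ha, pow_two] at this
      have hainv : a⁻¹ = a := inv_eq_of_mul_eq_one_right haa
      have hz2 : z * z = 1 := by
        have hc := hcomm z hzc
        have h1 : z⁻¹ = y * z * y := by
          rw [hzdef, hainv, hyinv]
          calc (a * y * a * y)⁻¹ = y⁻¹ * a⁻¹ * y⁻¹ * a⁻¹ := by group
          _ = y * a * y * a := by rw [hainv, hyinv]
          _ = y * (a * y * a * y) * y := by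
              rw [show y * (a * y * a * y) * y = y * a * y * a * (y * y) by group, hyy,
                mul_one]
        have h2 : z⁻¹ = z := by
          rw [h1]
          calc y * z * y = y * (z * y) := by group
          _ = y * (y * z) := by rw [← hc]
          _ = (y * y) * z := by group
          _ = z := by rw [hyy, one_mul]
        calc z * z = z * z⁻¹ := by rw [h2]
        _ = 1 := mul_inv_cancel z
      rcases eq_or_ne z 1 with h1 | h1
      · rw [h1]; exact Subgroup.one_mem Z
      · apply Subgroup.subset_closure
        refine ⟨hzc, ?_⟩
        have hdvd : orderOf z ∣ 2 := orderOf_dvd_of_pow_eq_one (by rwa [pow_two])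
        rcases (Nat.prime_two).eq_one_or_self_of_dvd _ hdvd with h | h
        · exact absurd (orderOf_eq_one_iff.mp h) h1
        · exact h
    | one =>
      have : (1 : P)⁻¹ * y⁻¹ * 1 * y = 1 := by group
      rw [this]; exact Subgroup.one_mem Z
    | mul a b _ _ iha ihb =>
      have : (a * b)⁻¹ * y⁻¹ * (a * b) * y
          = (b⁻¹ * (a⁻¹ * y⁻¹ * a * y) * b) * (b⁻¹ * y⁻¹ * b * y) := by group
      rw [this]; exact Subgroup.mul_mem Z (hnorm b iha) ihb
    | inv a _ iha =>
      have : (a⁻¹)⁻¹ * y⁻¹ * a⁻¹ * y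
          = (a⁻¹)⁻¹ * (a⁻¹ * y⁻¹ * a * y)⁻¹ * a⁻¹ := by group
      rw [this]; exact hnorm a⁻¹ (Subgroup.inv_mem Z iha)
  rw [Subgroup.closure_le]
  rintro x ⟨g, rfl⟩
  exact key g
end

section
/- Let p be a prime, P a finite extraspecial p-group with center Z, and X an elementary abelian subgroup of P with Z ≤ X. Let P₂ be a subgroup of the centralizer C_P(X) such that P₂ ∩ X = Z and P₂X = C_P(X). Then the map T ↦ TX is a well-defined order isomorphism from the poset (ordered by inclusion) of elementary abelian subgroups T of P with Z < T ≤ P₂ onto the poset of elementary abelian subgroups A of P with X < A. -/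
/-- A subgroup is elementary abelian for the prime `p` if it is abelian and
every element satisfies `a ^ p = 1`. -/
def IsElementaryAbelian (p : ℕ) {G : Type*} [Group G] (A : Subgroup G) : Prop :=
  (∀ a ∈ A, ∀ b ∈ A, Commute a b) ∧ ∀ a ∈ A, a ^ p = 1

/-- A finite `p`-group is extraspecial if its center has order `p` and coincides with
its commutator subgroup and its Frattini subgroup. -/
def IsExtraspecial (p : ℕ) (G : Type*) [Group G] : Prop :=
  Nat.card (Subgroup.center G) = p ∧ Subgroup.center G = commutator G ∧
    Subgroup.center G = frattini G

/-
Every elementary abelian `A > X` centralizes `X`, so it lies in `C_P(X) = P₂ X`. Since `P₂`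
centralizes `X`, the join `T ⊔ X` of a subgroup `T ≤ P₂` is the product set `T X`, and
Dedekind's modular law holds for the pairs involved. This gives the diamond isomorphism
`[Z, P₂] ≅ [X, C_P(X)]`, `T ↦ T X`, `A ↦ P₂ ∩ A`, which respects being elementary abelian
(joins of commuting elementary abelian subgroups are elementary abelian) and sends `Z` to `X`.
-/

namespace Subgroup

open scoped Pointwise

variable {G : Type*} [Group G] {x y z : Subgroup G}

theorem sup_inf_assoc_of_le_of_coe_sup_eq_mul (hxz : x ≤ z)
    (hsup : ((x ⊔ y : Subgroup G) : Set G) = (x : Set G) * (y : Set G)) :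
    (x ⊔ y) ⊓ z = x ⊔ y ⊓ z := by
  refine le_antisymm (fun g hg => ?_)
    (le_inf (sup_le_sup_left inf_le_left x) (sup_le hxz inf_le_right))
  have hg' : g ∈ (x : Set G) * (y ⊓ z : Subgroup G) := by
    rw [mul_inf_assoc x y z hxz, ← hsup]
    exact hg
  obtain ⟨a, ha, b, hb, rfl⟩ := hg'
  exact mul_mem (mem_sup_left ha) (mem_sup_right hb)

theorem sup_inf_assoc_of_le_of_left_le_normalizer_right (hxz : x ≤ z)
    (hxy : x ≤ normalizer (y : Set G)) : (x ⊔ y) ⊓ z = x ⊔ y ⊓ z :=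
  sup_inf_assoc_of_le_of_coe_sup_eq_mul hxz (coe_mul_of_left_le_normalizer_right x y hxy)

theorem sup_inf_assoc_of_le_of_right_le_normalizer_left (hxz : x ≤ z)
    (hyx : y ≤ normalizer (x : Set G)) : (x ⊔ y) ⊓ z = x ⊔ y ⊓ z :=
  sup_inf_assoc_of_le_of_coe_sup_eq_mul hxz (coe_mul_of_right_le_normalizer_left x y hyx)

end Subgroup

namespace IsElementaryAbelian

open Subgroup

variable {p : ℕ} {G : Type*} [Group G] {A B : Subgroup G}

theorem mono (hB : IsElementaryAbelian p B) (hAB : A ≤ B) : IsElementaryAbelian p A :=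
  ⟨fun a ha b hb => hB.1 a (hAB ha) b (hAB hb), fun a ha => hB.2 a (hAB ha)⟩

theorem le_centralizer (hB : IsElementaryAbelian p B) (hAB : A ≤ B) :
    B ≤ centralizer (A : Set G) :=
  fun b hb => mem_centralizer_iff.mpr fun a ha => hB.1 a (hAB ha) b hb

theorem sup (hA : IsElementaryAbelian p A) (hB : IsElementaryAbelian p B)
    (hAB : A ≤ centralizer (B : Set G)) : IsElementaryAbelian p (A ⊔ B) := by
  have hprod : ∀ g ∈ A ⊔ B, ∃ a ∈ A, ∃ b ∈ B, a * b = g := fun g hg => by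
    rwa [← SetLike.mem_coe, coe_mul_of_left_le_normalizer_right A B
      (hAB.trans (centralizer_le_normalizer _))] at hg
  have hcomm : ∀ a ∈ A, ∀ b ∈ B, Commute a b := fun a ha b hb =>
    ((mem_centralizer_iff.mp (hAB ha)) b hb).symm
  refine ⟨fun g hg g' hg' => ?_, fun g hg => ?_⟩
  · obtain ⟨a, ha, b, hb, rfl⟩ := hprod g hg
    obtain ⟨a', ha', b', hb', rfl⟩ := hprod g' hg'
    exact ((hA.1 a ha a' ha').mul_right (hcomm a ha b' hb')).mul_left
      ((hcomm a' ha' b hb).symm.mul_right (hB.1 b hb b' hb'))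
  · obtain ⟨a, ha, b, hb, rfl⟩ := hprod g hg
    rw [(hcomm a ha b hb).mul_pow, hA.2 a ha, hB.2 b hb, one_mul]

end IsElementaryAbelian

theorem upper_interval_iso_of_extraspecial_general
    (p : ℕ) (P : Type*) [Group P]
    (X : Subgroup P) (hX : IsElementaryAbelian p X)
    (hZX : Subgroup.center P ≤ X)
    (P₂ : Subgroup P) (hP₂le : P₂ ≤ Subgroup.centralizer (X : Set P))
    (hmeet : P₂ ⊓ X = Subgroup.center P)
    (hjoin : P₂ ⊔ X = Subgroup.centralizer (X : Set P)) :
    ∃ e : {T : Subgroup P // IsElementaryAbelian p T ∧ Subgroup.center P < T ∧ T ≤ P₂} ≃o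
          {A : Subgroup P // IsElementaryAbelian p A ∧ X < A},
      ∀ T, (e T : Subgroup P) = (T : Subgroup P) ⊔ X := by
  have hP₂N : P₂ ≤ Subgroup.normalizer (X : Set P) :=
    hP₂le.trans (Subgroup.centralizer_le_normalizer _)
  have hleft : ∀ T, Subgroup.center P ≤ T → T ≤ P₂ → P₂ ⊓ (T ⊔ X) = T := fun T hZT hTP₂ => by
    rw [inf_comm, Subgroup.sup_inf_assoc_of_le_of_left_le_normalizer_right hTP₂ (hTP₂.trans hP₂N),
      inf_comm, hmeet, sup_eq_left.mpr hZT]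
  have hright : ∀ A, IsElementaryAbelian p A → X ≤ A → P₂ ⊓ A ⊔ X = A := fun A hA hXA => by
    rw [sup_comm, ← Subgroup.sup_inf_assoc_of_le_of_right_le_normalizer_left hXA hP₂N, sup_comm,
      hjoin, inf_eq_right.mpr (hA.le_centralizer hXA)]
  have hfwd : ∀ T, IsElementaryAbelian p T → Subgroup.center P < T → T ≤ P₂ →
      IsElementaryAbelian p (T ⊔ X) ∧ X < T ⊔ X := fun T hT hZT hTP₂ =>
    ⟨hT.sup hX (hTP₂.trans hP₂le), le_sup_right.lt_of_ne fun h =>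
      hZT.ne (by rw [← hleft T hZT.le hTP₂, ← h, hmeet])⟩
  have hbwd : ∀ A, IsElementaryAbelian p A → X < A →
      IsElementaryAbelian p (P₂ ⊓ A) ∧ Subgroup.center P < P₂ ⊓ A ∧ P₂ ⊓ A ≤ P₂ :=
    fun A hA hXA =>
    ⟨hA.mono inf_le_right, (hmeet.symm.trans_le (inf_le_inf_left P₂ hXA.le)).lt_of_ne fun h =>
      hXA.ne (by rw [← hright A hA hXA.le, ← h, sup_eq_right.mpr hZX]), inf_le_left⟩
  refine ⟨Equiv.toOrderIso
    { toFun := fun T => ⟨T.1 ⊔ X, hfwd T.1 T.2.1 T.2.2.1 T.2.2.2⟩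
      invFun := fun A => ⟨P₂ ⊓ A.1, hbwd A.1 A.2.1 A.2.2⟩
      left_inv := fun T => Subtype.ext (hleft T.1 T.2.2.1.le T.2.2.2)
      right_inv := fun A => Subtype.ext (hright A.1 A.2.1 A.2.2.le) }
    (fun _ _ h => sup_le_sup_right h X) (fun _ _ h => inf_le_inf_left P₂ h), fun _ => rfl⟩

theorem upper_interval_iso_of_extraspecial
    (p : ℕ) (hp : p.Prime) (P : Type*) [Group P] [Finite P]
    (hPp : IsPGroup p P) (hext : IsExtraspecial p P)
    (X : Subgroup P) (hX : IsElementaryAbelian p X)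
    (hZX : Subgroup.center P ≤ X)
    (P₂ : Subgroup P) (hP₂le : P₂ ≤ Subgroup.centralizer (X : Set P))
    (hmeet : P₂ ⊓ X = Subgroup.center P)
    (hjoin : P₂ ⊔ X = Subgroup.centralizer (X : Set P)) :
    ∃ e : {T : Subgroup P // IsElementaryAbelian p T ∧ Subgroup.center P < T ∧ T ≤ P₂} ≃o
          {A : Subgroup P // IsElementaryAbelian p A ∧ X < A},
      ∀ T, (e T : Subgroup P) = (T : Subgroup P) ⊔ X :=
  upper_interval_iso_of_extraspecial_general p P X hX hZX P₂ hP₂le hmeet hjoin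
end

section
/- Let p be a prime and T a finite p-group such that Ω₁(T) = T, Z(T) < T, T/Z(T) is abelian, and the commutator subgroup T' is cyclic. If p = 2, assume further that |T'| = 2 and Z(T) is elementary abelian. Then |T'| = p and there exists a subgroup E of T with E extraspecial such that T = Z(T)E. -/
open scoped commutatorElement

namespace CenterExtraspecialAux

open Subgroup

variable {G : Type*} [Group G]

lemma mem_commutator_of (x y : G) : ⁅x, y⁆ ∈ commutator G := by
  rw [_root_.commutator_def]
  exact Subgroup.commutator_mem_commutator (Subgroup.mem_top x) (Subgroup.mem_top y)

lemma comm_mul_left' (hc : ∀ x y : G, ⁅x, y⁆ ∈ Subgroup.center G) (x y z : G) :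
    ⁅x * y, z⁆ = ⁅x, z⁆ * ⁅y, z⁆ := by
  have h1 : ⁅x * y, z⁆ = x * ⁅y, z⁆ * x⁻¹ * ⁅x, z⁆ := by group
  have h2 : x * ⁅y, z⁆ = ⁅y, z⁆ * x := (Subgroup.mem_center_iff.mp (hc y z)) x
  have h3 : ⁅y, z⁆ * ⁅x, z⁆ = ⁅x, z⁆ * ⁅y, z⁆ := (Subgroup.mem_center_iff.mp (hc x z)) _
  rw [h1, h2, mul_inv_cancel_right, h3]

lemma comm_mul_right' (hc : ∀ x y : G, ⁅x, y⁆ ∈ Subgroup.center G) (x y z : G) :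
    ⁅x, y * z⁆ = ⁅x, y⁆ * ⁅x, z⁆ := by
  have h1 : ⁅x, y * z⁆ = ⁅x, y⁆ * (y * ⁅x, z⁆ * y⁻¹) := by group
  have h2 : y * ⁅x, z⁆ = ⁅x, z⁆ * y := (Subgroup.mem_center_iff.mp (hc x z)) y
  rw [h1, h2]; group

/-- For fixed `x`, the map `y ↦ ⁅x, y⁆` as a monoid hom (when commutators are central). -/
def commHomR (hc : ∀ x y : G, ⁅x, y⁆ ∈ Subgroup.center G) (x : G) : G →* G where
  toFun y := ⁅x, y⁆
  map_one' := by group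
  map_mul' y z := comm_mul_right' hc x y z

/-- For fixed `z`, the map `y ↦ ⁅y, z⁆` as a monoid hom (when commutators are central). -/
def commHomL (hc : ∀ x y : G, ⁅x, y⁆ ∈ Subgroup.center G) (z : G) : G →* G where
  toFun y := ⁅y, z⁆
  map_one' := by group
  map_mul' x y := comm_mul_left' hc x y z

lemma comm_zpow_right' (hc : ∀ x y : G, ⁅x, y⁆ ∈ Subgroup.center G) (x y : G) (n : ℤ) :
    ⁅x, y ^ n⁆ = ⁅x, y⁆ ^ n := map_zpow (commHomR hc x) y n

lemma comm_pow_right' (hc : ∀ x y : G, ⁅x, y⁆ ∈ Subgroup.center G) (x y : G) (n : ℕ) :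
    ⁅x, y ^ n⁆ = ⁅x, y⁆ ^ n := map_pow (commHomR hc x) y n

lemma comm_inv_right' (hc : ∀ x y : G, ⁅x, y⁆ ∈ Subgroup.center G) (x y : G) :
    ⁅x, y⁻¹⁆ = ⁅x, y⁆⁻¹ := map_inv (commHomR hc x) y

lemma comm_zpow_left' (hc : ∀ x y : G, ⁅x, y⁆ ∈ Subgroup.center G) (x y : G) (n : ℤ) :
    ⁅x ^ n, y⁆ = ⁅x, y⁆ ^ n := map_zpow (commHomL hc y) x n

lemma comm_inv_left' (hc : ∀ x y : G, ⁅x, y⁆ ∈ Subgroup.center G) (x y : G) :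
    ⁅x⁻¹, y⁆ = ⁅x, y⁆⁻¹ := map_inv (commHomL hc y) x

lemma mem_sup_of_commute {H K : Subgroup G} (h : ∀ x ∈ H, ∀ y ∈ K, x * y = y * x) :
    ∀ z ∈ H ⊔ K, ∃ x ∈ H, ∃ y ∈ K, z = x * y := by
  intro z hz
  rw [← Subgroup.closure_eq H, ← Subgroup.closure_eq K, ← Subgroup.closure_union] at hz
  induction hz using Subgroup.closure_induction with
  | mem g hg =>
    rcases hg with hg | hg
    · exact ⟨g, hg, 1, one_mem _, (mul_one g).symm⟩
    · exact ⟨1, one_mem _, g, hg, (one_mul g).symm⟩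
  | one => exact ⟨1, one_mem _, 1, one_mem _, (one_mul 1).symm⟩
  | mul a b _ _ ha hb =>
    obtain ⟨x, hx, y, hy, rfl⟩ := ha
    obtain ⟨x', hx', y', hy', rfl⟩ := hb
    refine ⟨x * x', mul_mem hx hx', y * y', mul_mem hy hy', ?_⟩
    have hcom : x' * y = y * x' := h x' hx' y hy
    calc (x*y)*(x'*y') = x*(y*x')*y' := by group
      _ = x*(x'*y)*y' := by rw [← hcom]
      _ = (x*x')*(y*y') := by group
  | inv a _ ha =>
    obtain ⟨x, hx, y, hy, rfl⟩ := ha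
    refine ⟨x⁻¹, inv_mem hx, y⁻¹, inv_mem hy, ?_⟩
    calc (x*y)⁻¹ = y⁻¹ * x⁻¹ := by group
      _ = x⁻¹ * y⁻¹ := (h _ (inv_mem hx) _ (inv_mem hy)).symm

lemma mem_zpowers_subtype {H : Subgroup G} (c : G) (hcH : c ∈ H) (x : ↥H)
    (h : (x : G) ∈ Subgroup.zpowers c) : x ∈ Subgroup.zpowers (⟨c, hcH⟩ : ↥H) := by
  obtain ⟨k, hk⟩ := Subgroup.mem_zpowers_iff.mp h
  exact Subgroup.mem_zpowers_iff.mpr ⟨k, Subtype.ext (by push_cast; exact hk)⟩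

lemma normal_of_commutator_le {H : Subgroup G} (h : commutator G ≤ H) : H.Normal := by
  constructor
  intro n hn g
  have h1 : ⁅g, n⁆ ∈ H := h (mem_commutator_of g n)
  have h2 : g * n * g⁻¹ = ⁅g, n⁆ * n := by group
  rw [h2]; exact mul_mem h1 hn

lemma coe_commutatorElement {H : Subgroup G} (x y : ↥H) :
    ((⁅x, y⁆ : ↥H) : G) = ⁅(x : G), (y : G)⁆ := rfl

lemma commute_of_mem_closure {s : Set G} {x : G} (h : ∀ g ∈ s, Commute g x) :
    ∀ u ∈ Subgroup.closure s, Commute u x := by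
  intro u hu
  have hle : Subgroup.closure s ≤ Subgroup.centralizer {x} :=
    (Subgroup.closure_le _).mpr fun g hg =>
      Subgroup.mem_centralizer_iff.mpr (by rintro y rfl; exact (h g hg).symm.eq)
  have h1 : x * u = u * x := Subgroup.mem_centralizer_iff.mp (hle hu) x rfl
  exact (Commute.symm h1)

/-- The key criterion for being extraspecial. -/
lemma crit (p : ℕ) (hp : p.Prime) [Finite G] (c : G)
    (h1 : orderOf c = p)
    (h2 : c ∈ Subgroup.center G)
    (h3 : ∀ x : G, x ^ p ∈ Subgroup.zpowers c)
    (h6 : ∀ x y : G, ⁅x, y⁆ ∈ Subgroup.zpowers c)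
    (h5 : c ∈ commutator G)
    (h4 : ∀ x : G, x ∈ Subgroup.center G → x ∈ Subgroup.zpowers c) :
    IsExtraspecial p G := by
  have hfin : Finite (Subgroup G) :=
    Finite.of_injective _ (SetLike.coe_injective (A := Subgroup G))
  have hzle : Subgroup.zpowers c ≤ Subgroup.center G := zpowers_le.mpr h2
  have hcen : Subgroup.center G = Subgroup.zpowers c := le_antisymm h4 hzle
  have hc : ∀ x y : G, ⁅x, y⁆ ∈ Subgroup.center G := fun x y => hzle (h6 x y)
  have hcomm_le : commutator G ≤ Subgroup.zpowers c := by
    rw [commutator_eq_closure]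
    refine (Subgroup.closure_le _).mpr ?_
    rintro g ⟨g₁, g₂, rfl⟩
    exact h6 g₁ g₂
  have hcomm : commutator G = Subgroup.zpowers c := le_antisymm hcomm_le (zpowers_le.mpr h5)
  have hfr1 : Subgroup.zpowers c ≤ frattini G := by
    refine le_iInf₂ fun M hM => ?_
    rw [zpowers_le]
    by_contra hcM
    have hnz : (Subgroup.zpowers c).Normal := by
      constructor
      intro n hn g
      obtain ⟨k, rfl⟩ := Subgroup.mem_zpowers_iff.mp hn
      have h' := (Subgroup.mem_center_iff.mp (Subgroup.zpow_mem (Subgroup.center G) h2 k)) g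
      rw [h', mul_inv_cancel_right]
      exact Subgroup.zpow_mem _ (Subgroup.mem_zpowers c) k
    have htop : Subgroup.zpowers c ⊔ M = ⊤ := by
      refine hM.2 _ ?_
      rcases lt_or_eq_of_le (le_sup_right : M ≤ Subgroup.zpowers c ⊔ M) with h | h
      · exact h
      · exact absurd (h ▸ (le_sup_left : Subgroup.zpowers c ≤ _) (Subgroup.mem_zpowers c)) hcM
    have hdecomp : ∀ g : G, ∃ k : ℤ, ∃ m ∈ M, g = c ^ k * m := by
      intro g
      have hg : g ∈ (↑(Subgroup.zpowers c ⊔ M) : Set G) := htop ▸ trivial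
      rw [Subgroup.normal_mul] at hg
      obtain ⟨w, hw, m, hm, rfl⟩ := hg
      obtain ⟨k, rfl⟩ := Subgroup.mem_zpowers_iff.mp hw
      exact ⟨k, m, hm, rfl⟩
    have hcomm_M : commutator G ≤ M := by
      rw [commutator_eq_closure]
      refine (Subgroup.closure_le _).mpr ?_
      rintro g ⟨g₁, g₂, rfl⟩
      obtain ⟨k, m, hm, rfl⟩ := hdecomp g₁
      obtain ⟨l, m', hm', rfl⟩ := hdecomp g₂
      have e1 : ⁅c ^ k * m, c ^ l * m'⁆ = ⁅m, m'⁆ := by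
        have hck : ∀ y : G, ⁅c ^ k, y⁆ = 1 := fun y =>
          commutatorElement_eq_one_iff_commute.mpr
            (((Subgroup.mem_center_iff.mp (Subgroup.zpow_mem (Subgroup.center G) h2 k)) y).symm)
        have hcl : ⁅m, c ^ l⁆ = 1 :=
          commutatorElement_eq_one_iff_commute.mpr
            ((Subgroup.mem_center_iff.mp (Subgroup.zpow_mem (Subgroup.center G) h2 l)) m)
        rw [comm_mul_left' hc, hck, one_mul, comm_mul_right' hc, hcl, one_mul]
      rw [e1, commutatorElement_def]
      exact mul_mem (mul_mem (mul_mem hm hm') (inv_mem hm)) (inv_mem hm')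
    exact hcM (hcomm_M h5)
  have hfr2 : frattini G ≤ Subgroup.zpowers c := by
    intro x hx
    by_contra hxc
    set S : Set (Subgroup G) := {H | c ∈ H ∧ x ∉ H} with hS
    have hSne : S.Nonempty := ⟨Subgroup.zpowers c, Subgroup.mem_zpowers c, hxc⟩
    obtain ⟨M, hMS, hMmax⟩ := Set.Finite.exists_maximalFor id S (Set.toFinite S) hSne
    have hcM : Subgroup.zpowers c ≤ M := zpowers_le.mpr hMS.1
    have hMnormal : M.Normal := normal_of_commutator_le (hcomm_le.trans hcM)
    have hxMg : ∀ g : G, g ∉ M → x ∈ M ⊔ Subgroup.zpowers g := by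
      intro g hg
      by_contra hxH
      have : M = M ⊔ Subgroup.zpowers g :=
        le_antisymm le_sup_left (hMmax ⟨(le_sup_left : M ≤ M ⊔ Subgroup.zpowers g) hMS.1, hxH⟩ le_sup_left)
      exact hg (this ▸ (le_sup_right : Subgroup.zpowers g ≤ _) (Subgroup.mem_zpowers g))
    have hkey : M ⊔ Subgroup.zpowers x = ⊤ := by
      rw [eq_top_iff]
      intro g _
      by_cases hgM : g ∈ M
      · exact (le_sup_left : M ≤ _) hgM
      · have hxmem := hxMg g hgM
        have hxset : x ∈ (↑(M ⊔ Subgroup.zpowers g) : Set G) := hxmem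
        rw [Subgroup.normal_mul] at hxset
        obtain ⟨m, hm, w, hw, hxeq⟩ := hxset
        rw [SetLike.mem_coe] at hm hw
        obtain ⟨k, rfl⟩ := Subgroup.mem_zpowers_iff.mp hw
        replace hxeq : x = m * g ^ k := hxeq.symm
        have hgp : g ^ (p : ℤ) ∈ M := by
          have h' := h3 g
          rw [← zpow_natCast] at h'
          exact hcM h'
        have hpk : ¬ ((p : ℤ) ∣ k) := by
          rintro ⟨t, rfl⟩
          refine hMS.2 ?_
          rw [hxeq, zpow_mul]
          exact mul_mem hm (Subgroup.zpow_mem M hgp t)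
        have hcop : IsCoprime k (p : ℤ) := by
          rw [Int.isCoprime_iff_gcd_eq_one]
          have : ¬ (p ∣ k.natAbs) := fun h => hpk (Int.dvd_natAbs.mp (Int.natCast_dvd_natCast.mpr h))
          exact Nat.Coprime.gcd_eq_one ((Nat.coprime_comm).mp ((Nat.Prime.coprime_iff_not_dvd hp).mpr this))
        obtain ⟨u, v, huv⟩ := hcop
        have hgk : g ^ k ∈ M ⊔ Subgroup.zpowers x := by
          have : g ^ k = m⁻¹ * x := by rw [hxeq, ← mul_assoc, inv_mul_cancel, one_mul]
          rw [this]
          exact mul_mem ((le_sup_left : M ≤ _) (inv_mem hm))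
            ((le_sup_right : Subgroup.zpowers x ≤ _) (Subgroup.mem_zpowers x))
        have hgdecomp : g = (g ^ k) ^ u * (g ^ (p : ℤ)) ^ v := by
          rw [← zpow_mul, ← zpow_mul, ← zpow_add, mul_comm k u, mul_comm (p:ℤ) v, huv, zpow_one]
        rw [hgdecomp]
        exact mul_mem (Subgroup.zpow_mem _ hgk u)
          (Subgroup.zpow_mem _ ((le_sup_left : M ≤ _) hgp) v)
    have hcoatom : IsCoatom M := by
      constructor
      · intro h
        rw [h] at hMS
        exact hMS.2 (Subgroup.mem_top x)
      · intro N hN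
        obtain ⟨g, hgN, hgM⟩ := SetLike.exists_of_lt hN
        have hxN : x ∈ N := (sup_le hN.le (zpowers_le.mpr hgN)) (hxMg g hgM)
        have hle : M ⊔ Subgroup.zpowers x ≤ N := sup_le hN.le (zpowers_le.mpr hxN)
        rw [hkey] at hle
        exact le_antisymm le_top hle
    exact hMS.2 (frattini_le_coatom hcoatom hx)
  have hfr : frattini G = Subgroup.zpowers c := le_antisymm hfr2 hfr1
  refine ⟨?_, hcen.trans hcomm.symm, hcen.trans hfr.symm⟩
  rw [hcen, Nat.card_zpowers, h1]

section E1
variable (a b : G)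

lemma central_move (hc : ∀ x y : G, ⁅x, y⁆ ∈ Subgroup.center G) (m : ℤ) (w : G) :
    ⁅a, b⁆ ^ m * w = w * ⁅a, b⁆ ^ m :=
  ((Subgroup.mem_center_iff.mp (Subgroup.zpow_mem _ (hc a b) m)) w).symm

lemma swap_pow (hc : ∀ x y : G, ⁅x, y⁆ ∈ Subgroup.center G) (i j : ℤ) :
    b ^ j * a ^ i = a ^ i * b ^ j * ⁅a, b⁆ ^ (-(i * j)) := by
  have h1 : ⁅b ^ j, a ^ i⁆ = ⁅a, b⁆ ^ (-(i * j)) := by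
    rw [comm_zpow_left' hc, comm_zpow_right' hc, ← commutatorElement_inv, inv_zpow,
      ← zpow_neg, ← zpow_mul]
    congr 1
    ring
  have h2 : b ^ j * a ^ i = ⁅b ^ j, a ^ i⁆ * (a ^ i * b ^ j) := by group
  rw [h2, h1, central_move a b hc, mul_assoc]

lemma E1_prod (hc : ∀ x y : G, ⁅x, y⁆ ∈ Subgroup.center G) (i j k i' j' k' : ℤ) :
    (a ^ i * b ^ j * ⁅a, b⁆ ^ k) * (a ^ i' * b ^ j' * ⁅a, b⁆ ^ k') =
      a ^ (i + i') * b ^ (j + j') * ⁅a, b⁆ ^ (-(i' * j) + k + k') := by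
  set c := ⁅a, b⁆ with hcab
  calc (a ^ i * b ^ j * c ^ k) * (a ^ i' * b ^ j' * c ^ k')
      = a ^ i * b ^ j * (c ^ k * a ^ i') * b ^ j' * c ^ k' := by group
    _ = a ^ i * b ^ j * (a ^ i' * c ^ k) * b ^ j' * c ^ k' := by rw [central_move a b hc]
    _ = a ^ i * (b ^ j * a ^ i') * (c ^ k * b ^ j') * c ^ k' := by group
    _ = a ^ i * (a ^ i' * b ^ j * c ^ (-(i' * j))) * (b ^ j' * c ^ k) * c ^ k' := by
        rw [swap_pow a b hc, central_move a b hc]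
    _ = a ^ i * a ^ i' * b ^ j * (c ^ (-(i' * j)) * b ^ j') * (c ^ k * c ^ k') := by group
    _ = a ^ i * a ^ i' * b ^ j * (b ^ j' * c ^ (-(i' * j))) * (c ^ k * c ^ k') := by
        rw [central_move a b hc]
    _ = (a ^ i * a ^ i') * (b ^ j * b ^ j') * (c ^ (-(i' * j)) * c ^ k * c ^ k') := by group
    _ = a ^ (i + i') * b ^ (j + j') * c ^ (-(i' * j) + k + k') := by
        rw [← zpow_add, ← zpow_add, ← zpow_add, ← zpow_add]

lemma E1_inv (hc : ∀ x y : G, ⁅x, y⁆ ∈ Subgroup.center G) (i j k : ℤ) :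
    (a ^ i * b ^ j * ⁅a, b⁆ ^ k)⁻¹ = a ^ (-i) * b ^ (-j) * ⁅a, b⁆ ^ (-(i * j) - k) := by
  set c := ⁅a, b⁆ with hcab
  have h1 : (a ^ i * b ^ j * c ^ k)⁻¹ = c ^ (-k) * (b ^ (-j) * a ^ (-i)) := by
    rw [zpow_neg, zpow_neg, zpow_neg]; group
  rw [h1, swap_pow a b hc, central_move a b hc]
  have : -(-i * -j) = -(i * j) := by ring
  rw [this, mul_assoc, ← zpow_add, ← sub_eq_add_neg]

lemma E1_form (hc : ∀ x y : G, ⁅x, y⁆ ∈ Subgroup.center G) : ∀ u ∈ Subgroup.closure {a, b},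
    ∃ i j k : ℤ, u = a ^ i * b ^ j * ⁅a, b⁆ ^ k := by
  intro u hu
  induction hu using Subgroup.closure_induction with
  | mem g hg =>
    rcases hg with rfl | rfl
    · exact ⟨1, 0, 0, by simp⟩
    · exact ⟨0, 1, 0, by simp⟩
  | one => exact ⟨0, 0, 0, by simp⟩
  | mul x y _ _ hx hy =>
    obtain ⟨i, j, k, rfl⟩ := hx
    obtain ⟨i', j', k', rfl⟩ := hy
    exact ⟨i + i', j + j', -(i' * j) + k + k', E1_prod a b hc i j k i' j' k'⟩
  | inv x _ hx =>
    obtain ⟨i, j, k, rfl⟩ := hx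
    exact ⟨-i, -j, -(i * j) - k, E1_inv a b hc i j k⟩

lemma E1_center_le (hc : ∀ x y : G, ⁅x, y⁆ ∈ Subgroup.center G) (p : ℕ)
    (hordc : orderOf ⁅a, b⁆ = p)
    (hpa : a ^ p ∈ Subgroup.zpowers ⁅a, b⁆) (hpb : b ^ p ∈ Subgroup.zpowers ⁅a, b⁆)
    (u : G) (hu : u ∈ Subgroup.closure {a, b})
    (hua : ⁅u, a⁆ = 1) (hub : ⁅u, b⁆ = 1) : u ∈ Subgroup.zpowers ⁅a, b⁆ := by
  set c := ⁅a, b⁆ with hcab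
  obtain ⟨i, j, k, rfl⟩ := E1_form a b hc u hu
  have hself : ∀ x : G, ∀ n : ℤ, ⁅x ^ n, x⁆ = 1 := fun x n => by
    rw [comm_zpow_left' hc]
    have : ⁅x, x⁆ = 1 := by group
    rw [this, one_zpow]
  have hcz : ∀ (n : ℤ) (y : G), ⁅c ^ n, y⁆ = 1 := fun n y =>
    commutatorElement_eq_one_iff_commute.mpr
      (((Subgroup.mem_center_iff.mp (Subgroup.zpow_mem _ (hc a b) n)) y).symm)
  have hja : ⁅a ^ i * b ^ j * c ^ k, a⁆ = c ^ (-j) := by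
    rw [comm_mul_left' hc, comm_mul_left' hc, hself, hcz, comm_zpow_left' hc,
      ← commutatorElement_inv, inv_zpow, ← zpow_neg]
    simp [hcab]
  have hib : ⁅a ^ i * b ^ j * c ^ k, b⁆ = c ^ i := by
    rw [comm_mul_left' hc, comm_mul_left' hc, hself, hcz, comm_zpow_left' hc]
    simp [hcab]
  rw [hua] at hja
  rw [hub] at hib
  have hdvdj : (p : ℤ) ∣ j := by
    rw [← hordc]
    exact orderOf_dvd_iff_zpow_eq_one.mpr (by rw [← neg_neg j, zpow_neg, ← hja, inv_one])
  have hdvdi : (p : ℤ) ∣ i := by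
    rw [← hordc]
    exact orderOf_dvd_iff_zpow_eq_one.mpr hib.symm
  obtain ⟨t, rfl⟩ := hdvdi
  obtain ⟨s, rfl⟩ := hdvdj
  have hma : a ^ ((p : ℤ) * t) ∈ Subgroup.zpowers c := by
    rw [zpow_mul, zpow_natCast]
    exact Subgroup.zpow_mem _ hpa t
  have hmb : b ^ ((p : ℤ) * s) ∈ Subgroup.zpowers c := by
    rw [zpow_mul, zpow_natCast]
    exact Subgroup.zpow_mem _ hpb s
  exact mul_mem (mul_mem hma hmb) (Subgroup.zpow_mem _ (Subgroup.mem_zpowers c) k)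

/-- decomposition of an arbitrary element into a product of an element of `⟨a,b⟩` and a
centralizing element. -/
lemma decompose_elt (hc : ∀ x y : G, ⁅x, y⁆ ∈ Subgroup.center G) (t : G) (m n : ℤ)
    (hm : ⁅t, a⁆ = ⁅a, b⁆ ^ m) (hn : ⁅t, b⁆ = ⁅a, b⁆ ^ n) :
    ∃ e ∈ Subgroup.closure {a, b}, ∃ s ∈ Subgroup.centralizer {a, b}, t = e * s := by
  set c := ⁅a, b⁆ with hcab
  have haE : a ∈ Subgroup.closure ({a, b} : Set G) :=
    Subgroup.subset_closure (Set.mem_insert a {b})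
  have hbE : b ∈ Subgroup.closure ({a, b} : Set G) :=
    Subgroup.subset_closure (Set.mem_insert_of_mem a rfl)
  set e := a ^ n * b ^ (-m) with he
  have hea : ⁅e, a⁆ = c ^ m := by
    rw [he, comm_mul_left' hc, comm_zpow_left' hc, comm_zpow_left' hc]
    have h1 : ⁅a, a⁆ = 1 := by group
    rw [h1, one_zpow, one_mul, ← commutatorElement_inv, inv_zpow, ← zpow_neg, neg_neg]
  have heb : ⁅e, b⁆ = c ^ n := by
    rw [he, comm_mul_left' hc, comm_zpow_left' hc, comm_zpow_left' hc]
    have h1 : ⁅b, b⁆ = 1 := by group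
    rw [h1, one_zpow, mul_one]
  have hsa : ⁅e⁻¹ * t, a⁆ = 1 := by
    rw [comm_mul_left' hc, comm_inv_left' hc, hea, hm, inv_mul_cancel]
  have hsb : ⁅e⁻¹ * t, b⁆ = 1 := by
    rw [comm_mul_left' hc, comm_inv_left' hc, heb, hn, inv_mul_cancel]
  refine ⟨e, mul_mem (Subgroup.zpow_mem _ haE n) (Subgroup.zpow_mem _ hbE (-m)), e⁻¹ * t, ?_, by group⟩
  refine Subgroup.mem_centralizer_iff.mpr ?_
  rintro y (rfl | rfl)
  · exact (commutatorElement_eq_one_iff_commute.mp hsa).symm.eq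
  · exact (commutatorElement_eq_one_iff_commute.mp hsb).symm.eq

end E1

/-- Build `IsExtraspecial` for a subgroup of the ambient group. -/
lemma build (p : ℕ) (hp : p.Prime) [Finite G] (c a b : G) (hcab : c = ⁅a, b⁆)
    (hcZ : c ∈ Subgroup.center G) (hordc : orderOf c = p)
    (hcomm : ∀ x y : G, ⁅x, y⁆ ∈ Subgroup.zpowers c)
    (hpow : ∀ x : G, x ^ p ∈ Subgroup.zpowers c)
    (E : Subgroup G) (haE : a ∈ E) (hbE : b ∈ E)
    (hcen : ∀ x ∈ E, (∀ y ∈ E, x * y = y * x) → x ∈ Subgroup.zpowers c) :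
    IsExtraspecial p ↥E := by
  have hcE : c ∈ E := by
    rw [hcab, commutatorElement_def]
    exact mul_mem (mul_mem (mul_mem haE hbE) (inv_mem haE)) (inv_mem hbE)
  apply crit p hp (⟨c, hcE⟩ : ↥E)
  · exact (Subgroup.orderOf_mk c hcE).trans hordc
  · exact Subgroup.mem_center_iff.mpr fun g =>
      Subtype.ext ((Subgroup.mem_center_iff.mp hcZ) (g : G))
  · intro x
    refine mem_zpowers_subtype c hcE _ ?_
    have : ((x ^ p : ↥E) : G) = (x : G) ^ p := by push_cast; rfl
    rw [this]
    exact hpow (x : G)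
  · intro x y
    refine mem_zpowers_subtype c hcE _ ?_
    rw [coe_commutatorElement]
    exact hcomm (x : G) (y : G)
  · have heq : (⟨c, hcE⟩ : ↥E) = ⁅(⟨a, haE⟩ : ↥E), (⟨b, hbE⟩ : ↥E)⁆ := Subtype.ext hcab
    rw [heq, _root_.commutator_def]
    exact Subgroup.commutator_mem_commutator (Subgroup.mem_top _) (Subgroup.mem_top _)
  · intro x hx
    refine mem_zpowers_subtype c hcE _ ?_
    refine hcen (x : G) x.2 ?_
    intro y hy
    exact (congrArg Subtype.val ((Subgroup.mem_center_iff.mp hx) (⟨y, hy⟩ : ↥E))).symm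

end CenterExtraspecialAux

open Subgroup CenterExtraspecialAux in
/-- The main induction. -/
theorem centerExtraspecialAux.{v} (n : ℕ) : ∀ (G : Type v) [Group G] [Finite G], Nat.card G ≤ n →
    ∀ (p : ℕ), p.Prime → ∀ c : G, c ∈ Subgroup.center G → orderOf c = p →
    (∀ x y : G, ⁅x, y⁆ ∈ Subgroup.zpowers c) → (∀ x : G, x ^ p ∈ Subgroup.zpowers c) →
    (∃ x y : G, ⁅x, y⁆ ≠ 1) →
    ∃ E : Subgroup G, IsExtraspecial p ↥E ∧ Subgroup.center G ⊔ E = ⊤ := by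
  induction n with
  | zero =>
    intro G _ _ hcard
    have : 0 < Nat.card G := Nat.card_pos
    omega
  | succ n ih =>
    intro G _ _ hcard p hp c hcZ hordc hcomm hpow hnab
    obtain ⟨a, b, hab⟩ := hnab
    -- rebase the generator of the commutator subgroup to `⁅a, b⁆`
    have hd : ⁅a, b⁆ ∈ Subgroup.zpowers c := hcomm a b
    have hcp : c ^ p = 1 := by rw [← hordc]; exact pow_orderOf_eq_one c
    have hdp : ⁅a, b⁆ ^ p = 1 := by
      obtain ⟨k, hk⟩ := Subgroup.mem_zpowers_iff.mp hd
      rw [← hk, ← zpow_natCast, ← zpow_mul, mul_comm, zpow_mul, zpow_natCast, hcp, one_zpow]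
    have hordd : orderOf ⁅a, b⁆ = p := by
      have h1 := orderOf_dvd_of_pow_eq_one hdp
      rcases (Nat.Prime.eq_one_or_self_of_dvd hp _ h1) with h | h
      · exact absurd (orderOf_eq_one_iff.mp h) hab
      · exact h
    have hzd : Subgroup.zpowers ⁅a, b⁆ = Subgroup.zpowers c := by
      refine Subgroup.eq_of_le_of_card_ge (zpowers_le.mpr hd) ?_
      rw [Nat.card_zpowers, Nat.card_zpowers, hordc, hordd]
    set d := ⁅a, b⁆ with hdab
    have hdZ : d ∈ Subgroup.center G := (zpowers_le.mpr hcZ) hd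
    have hcomm' : ∀ x y : G, ⁅x, y⁆ ∈ Subgroup.zpowers d := fun x y => hzd ▸ hcomm x y
    have hpow' : ∀ x : G, x ^ p ∈ Subgroup.zpowers d := fun x => hzd ▸ hpow x
    have hc : ∀ x y : G, ⁅x, y⁆ ∈ Subgroup.center G := fun x y =>
      (zpowers_le.mpr hdZ) (hcomm' x y)
    -- the subgroups E₁ and C
    set E₁ := Subgroup.closure ({a, b} : Set G) with hE₁
    set C := Subgroup.centralizer ({a, b} : Set G) with hC
    have haE : a ∈ E₁ := Subgroup.subset_closure (Set.mem_insert a {b})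
    have hbE : b ∈ E₁ := Subgroup.subset_closure (Set.mem_insert_of_mem a rfl)
    have hdecomp : ∀ t : G, ∃ e ∈ E₁, ∃ s ∈ C, t = e * s := by
      intro t
      obtain ⟨m, hm⟩ := Subgroup.mem_zpowers_iff.mp (hcomm' t a)
      obtain ⟨k, hk⟩ := Subgroup.mem_zpowers_iff.mp (hcomm' t b)
      exact decompose_elt a b hc t m k hm.symm hk.symm
    have hCcomm : ∀ v ∈ C, ∀ u ∈ E₁, u * v = v * u := by
      intro v hv u hu
      refine (commute_of_mem_closure ?_ u hu).eq
      rintro g (rfl | rfl)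
      · exact (Subgroup.mem_centralizer_iff.mp hv g (Set.mem_insert g {b}))
      · exact (Subgroup.mem_centralizer_iff.mp hv g (Set.mem_insert_of_mem a rfl))
    have hdC : d ∈ C := Subgroup.mem_centralizer_iff.mpr fun g _ =>
      Subgroup.mem_center_iff.mp hdZ g
    have hCne : C ≠ ⊤ := by
      intro h
      have haC : a ∈ C := h ▸ Subgroup.mem_top a
      have := Subgroup.mem_centralizer_iff.mp haC b (Set.mem_insert_of_mem a rfl)
      exact hab (commutatorElement_eq_one_iff_commute.mpr this.symm)
    -- center elements of C are central in G
    have hCcen_center : ∀ z ∈ C, (∀ v ∈ C, v * z = z * v) → z ∈ Subgroup.center G := by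
      intro z hz hzC
      refine Subgroup.mem_center_iff.mpr fun g => ?_
      obtain ⟨e, he, s, hs, rfl⟩ := hdecomp g
      have h1 : e * z = z * e := hCcomm z hz e he
      have h2 : s * z = z * s := hzC s hs
      calc e * s * z = e * (s * z) := by group
        _ = e * (z * s) := by rw [h2]
        _ = (e * z) * s := by group
        _ = (z * e) * s := by rw [h1]
        _ = z * (e * s) := by group
    by_cases hCab : ∀ u ∈ C, ∀ v ∈ C, u * v = v * u
    -- Case 1 : C is abelian, E = E₁ works
    · have hCZ : C ≤ Subgroup.center G := fun z hz =>
        hCcen_center z hz (fun v hv => hCab v hv z hz)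
      refine ⟨E₁, ?_, ?_⟩
      · refine build p hp d a b hdab hdZ hordd hcomm' hpow' E₁ haE hbE ?_
        intro x hx hxcen
        have hxa : ⁅x, a⁆ = 1 := commutatorElement_eq_one_iff_commute.mpr (hxcen a haE)
        have hxb : ⁅x, b⁆ = 1 := commutatorElement_eq_one_iff_commute.mpr (hxcen b hbE)
        exact E1_center_le a b hc p hordd (hpow' a) (hpow' b) x hx hxa hxb
      · rw [eq_top_iff]
        intro t _
        obtain ⟨e, he, s, hs, rfl⟩ := hdecomp t
        exact mul_mem ((le_sup_right : E₁ ≤ _) he)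
          ((le_sup_left : Subgroup.center G ≤ _) (hCZ hs))
    -- Case 2 : C is not abelian; recurse
    · push_neg at hCab
      obtain ⟨u, hu, v, hv, huv⟩ := hCab
      have hcardC : Nat.card ↥C ≤ n := by
        have hlt : Nat.card ↥C < Nat.card G := by
          by_contra h
          push_neg at h
          exact hCne (Subgroup.eq_top_of_le_card (H := C) h)
        omega
      set dC : ↥C := ⟨d, hdC⟩ with hdCdef
      have h1C : dC ∈ Subgroup.center ↥C := Subgroup.mem_center_iff.mpr fun g =>
        Subtype.ext (Subgroup.mem_center_iff.mp hdZ (g : G))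
      have h2C : orderOf dC = p := (Subgroup.orderOf_mk d hdC).trans hordd
      have h3C : ∀ x y : ↥C, ⁅x, y⁆ ∈ Subgroup.zpowers dC := fun x y =>
        mem_zpowers_subtype d hdC _ (by rw [coe_commutatorElement]; exact hcomm' _ _)
      have h4C : ∀ x : ↥C, x ^ p ∈ Subgroup.zpowers dC := fun x =>
        mem_zpowers_subtype d hdC _ (by
          have : ((x ^ p : ↥C) : G) = (x : G) ^ p := by push_cast; rfl
          rw [this]; exact hpow' _)
      have h5C : ∃ x y : ↥C, ⁅x, y⁆ ≠ 1 := by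
        refine ⟨⟨u, hu⟩, ⟨v, hv⟩, fun h => huv ?_⟩
        have h' : (((⁅(⟨u, hu⟩ : ↥C), (⟨v, hv⟩ : ↥C)⁆ : ↥C)) : G) = ((1 : ↥C) : G) :=
          congrArg Subtype.val h
        rw [coe_commutatorElement] at h'
        exact commutatorElement_eq_one_iff_commute.mp h'
      obtain ⟨E₂, hE₂, hsupC⟩ := ih ↥C hcardC p hp dC h1C h2C h3C h4C h5C
      obtain ⟨hcard₂, hcc₂, -⟩ := hE₂
      set F := E₂.map C.subtype with hFdef
      have hFC : F ≤ C := by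
        rintro x ⟨y, hy, rfl⟩
        exact y.2
      have hcommle : commutator G ≤ Subgroup.zpowers d := by
        rw [commutator_eq_closure]
        refine (Subgroup.closure_le _).mpr ?_
        rintro g ⟨g₁, g₂, rfl⟩
        exact hcomm' g₁ g₂
      have him : ∀ g : ↥E₂, g ∈ Subgroup.center ↥E₂ → ((g : ↥C) : G) ∈ Subgroup.zpowers d := by
        intro g hg
        rw [hcc₂] at hg
        have hmap : (commutator ↥E₂).map (C.subtype.comp E₂.subtype) ≤ commutator G := by
          rw [_root_.commutator_def, _root_.commutator_def, Subgroup.map_commutator]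
          exact Subgroup.commutator_mono le_top le_top
        exact hcommle (hmap (Subgroup.mem_map_of_mem _ hg))
      have hdp' : d ^ p = 1 := by rw [← hordd]; exact pow_orderOf_eq_one d
      have hdF : d ∈ F := by
        have hne : ¬ (∀ g ∈ Subgroup.center ↥E₂, g = (1 : ↥E₂)) := by
          intro hall
          have hbot : Subgroup.center ↥E₂ = ⊥ := (Subgroup.eq_bot_iff_forall _).mpr hall
          rw [hbot] at hcard₂
          rw [Subgroup.card_bot] at hcard₂
          exact hp.one_lt.ne' hcard₂.symm
        push_neg at hne
        obtain ⟨g, hg, hg1⟩ := hne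
        have hw : ((g : ↥C) : G) ∈ Subgroup.zpowers d := him g hg
        have hwne : ((g : ↥C) : G) ≠ 1 := by
          intro h
          exact hg1 (Subtype.ext (Subtype.ext h))
        have hwp : ((g : ↥C) : G) ^ p = 1 := by
          obtain ⟨k, hk⟩ := Subgroup.mem_zpowers_iff.mp hw
          rw [← hk, ← zpow_natCast, ← zpow_mul, mul_comm, zpow_mul, zpow_natCast, hdp', one_zpow]
        have hordw : orderOf ((g : ↥C) : G) = p := by
          rcases Nat.Prime.eq_one_or_self_of_dvd hp _ (orderOf_dvd_of_pow_eq_one hwp) with h | h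
          · exact absurd (orderOf_eq_one_iff.mp h) hwne
          · exact h
        have hzw : Subgroup.zpowers ((g : ↥C) : G) = Subgroup.zpowers d := by
          refine Subgroup.eq_of_le_of_card_ge (zpowers_le.mpr hw) ?_
          rw [Nat.card_zpowers, Nat.card_zpowers, hordw, hordd]
        have hwF : ((g : ↥C) : G) ∈ F := Subgroup.mem_map.mpr ⟨(g : ↥C), g.2, rfl⟩
        exact (zpowers_le.mpr hwF) (hzw ▸ Subgroup.mem_zpowers d)
      have hFcen : ∀ x ∈ F, (∀ y ∈ F, x * y = y * x) → x ∈ Subgroup.zpowers d := by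
        rintro x ⟨y, hy, rfl⟩ hcom
        have hyc : (⟨y, hy⟩ : ↥E₂) ∈ Subgroup.center ↥E₂ := by
          refine Subgroup.mem_center_iff.mpr fun z => ?_
          apply Subtype.ext
          apply Subtype.ext
          show ((z : ↥C) : G) * ((y : ↥C) : G) = ((y : ↥C) : G) * ((z : ↥C) : G)
          exact (hcom ((z : ↥C) : G) (Subgroup.mem_map.mpr ⟨(z : ↥C), z.2, rfl⟩)).symm
        exact him _ hyc
      set E := E₁ ⊔ F with hEdef
      have hEcomm : ∀ x ∈ E₁, ∀ y ∈ F, x * y = y * x := fun x hx y hy =>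
        hCcomm y (hFC hy) x hx
      have haE' : a ∈ E := (le_sup_left : E₁ ≤ E) haE
      have hbE' : b ∈ E := (le_sup_left : E₁ ≤ E) hbE
      refine ⟨E, ?_, ?_⟩
      · refine build p hp d a b hdab hdZ hordd hcomm' hpow' E haE' hbE' ?_
        intro x hx hxcen
        obtain ⟨e, he, w, hw, rfl⟩ := mem_sup_of_commute hEcomm x hx
        have hwa : ⁅w, a⁆ = 1 :=
          commutatorElement_eq_one_iff_commute.mpr (hCcomm w (hFC hw) a haE).symm
        have hwb : ⁅w, b⁆ = 1 :=
          commutatorElement_eq_one_iff_commute.mpr (hCcomm w (hFC hw) b hbE).symm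
        have hea : ⁅e, a⁆ = 1 := by
          have h1 : ⁅e * w, a⁆ = 1 := commutatorElement_eq_one_iff_commute.mpr (hxcen a haE')
          rw [comm_mul_left' hc, hwa, mul_one] at h1
          exact h1
        have heb : ⁅e, b⁆ = 1 := by
          have h1 : ⁅e * w, b⁆ = 1 := commutatorElement_eq_one_iff_commute.mpr (hxcen b hbE')
          rw [comm_mul_left' hc, hwb, mul_one] at h1
          exact h1
        have heZ : e ∈ Subgroup.zpowers d :=
          E1_center_le a b hc p hordd (hpow' a) (hpow' b) e he hea heb
        have hxF : e * w ∈ F := mul_mem ((zpowers_le.mpr hdF) heZ) hw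
        refine hFcen _ hxF ?_
        intro y hy
        exact hxcen y ((le_sup_right : F ≤ E) hy)
      · rw [eq_top_iff]
        intro t _
        obtain ⟨e, he, s, hs, rfl⟩ := hdecomp t
        have hsC : (⟨s, hs⟩ : ↥C) ∈ Subgroup.center ↥C ⊔ E₂ := hsupC ▸ Subgroup.mem_top _
        have hcenE₂comm : ∀ x ∈ Subgroup.center ↥C, ∀ y ∈ E₂, x * y = y * x := fun x hx y _ =>
          ((Subgroup.mem_center_iff.mp hx) y).symm
        obtain ⟨z, hz, w, hw2, heq⟩ := mem_sup_of_commute hcenE₂comm _ hsC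
        have hseq : s = (z : G) * ((w : ↥C) : G) := by
          have := congrArg Subtype.val heq
          exact this
        have hzZ : (z : G) ∈ Subgroup.center G :=
          hCcen_center (z : G) z.2 fun v hv =>
            congrArg Subtype.val ((Subgroup.mem_center_iff.mp hz) (⟨v, hv⟩ : ↥C))
        have hwF : ((w : ↥C) : G) ∈ F := Subgroup.mem_map.mpr ⟨w, hw2, rfl⟩
        have h1 : e ∈ Subgroup.center G ⊔ E := (le_sup_right : E ≤ _) ((le_sup_left : E₁ ≤ E) he)
        have h2 : (z : G) ∈ Subgroup.center G ⊔ E := (le_sup_left : Subgroup.center G ≤ _) hzZ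
        have h3 : ((w : ↥C) : G) ∈ Subgroup.center G ⊔ E :=
          (le_sup_right : E ≤ _) ((le_sup_right : F ≤ E) hwF)
        rw [hseq]
        exact mul_mem h1 (mul_mem h2 h3)

open Subgroup CenterExtraspecialAux in
theorem center_times_extraspecial_decomposition
    (p : ℕ) (hp : p.Prime) (T : Type*) [Group T] [Finite T]
    (hTp : IsPGroup p T) (homega : Omega1 p T = ⊤)
    (hZ : Subgroup.center T < ⊤)
    (hab : commutator T ≤ Subgroup.center T)
    (hcyc : IsCyclic ↥(commutator T))
    (h2 : p = 2 → Nat.card ↥(commutator T) = 2 ∧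
      IsElementaryAbelian 2 (Subgroup.center T)) :
    Nat.card ↥(commutator T) = p ∧
      ∃ E : Subgroup T, IsExtraspecial p ↥E ∧ Subgroup.center T ⊔ E = ⊤ := by
  have hc : ∀ x y : T, ⁅x, y⁆ ∈ Subgroup.center T := fun x y => hab (mem_commutator_of x y)
  -- all commutators have order dividing p
  have hcp : ∀ x y : T, ⁅x, y⁆ ^ p = 1 := by
    intro x y
    have hy : y ∈ Omega1 p T := homega ▸ Subgroup.mem_top y
    rw [Omega1] at hy
    induction hy using Subgroup.closure_induction with
    | mem g hg =>
      have hg' : orderOf g = p := hg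
      rw [← comm_pow_right' hc]
      have h1 : g ^ p = 1 := by rw [← hg']; exact pow_orderOf_eq_one g
      rw [h1]
      group
    | one =>
      have h1 : ⁅x, (1 : T)⁆ = 1 := by group
      rw [h1, one_pow]
    | mul a b _ _ ha hb =>
      have hcm : Commute ⁅x, a⁆ ⁅x, b⁆ :=
        ((Subgroup.mem_center_iff.mp (hc x a)) ⁅x, b⁆).symm
      rw [comm_mul_right' hc, hcm.mul_pow, ha, hb, one_mul]
    | inv a _ ha =>
      rw [comm_inv_right' hc, inv_pow, ha, inv_one]
  have hexpcomm : ∀ t ∈ commutator T, t ∈ Subgroup.center T ∧ t ^ p = 1 := by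
    have hle : commutator T ≤ {
        carrier := {t : T | t ∈ Subgroup.center T ∧ t ^ p = 1}
        mul_mem' := fun {a b} ha hb => ⟨mul_mem ha.1 hb.1, by
          have hcab : Commute a b := ((Subgroup.mem_center_iff.mp ha.1) b).symm
          rw [hcab.mul_pow, ha.2, hb.2, one_mul]⟩
        one_mem' := ⟨one_mem _, one_pow p⟩
        inv_mem' := fun {a} ha => ⟨inv_mem ha.1, by rw [inv_pow, ha.2, inv_one]⟩ } := by
      rw [commutator_eq_closure]
      refine (Subgroup.closure_le _).mpr ?_
      rintro g ⟨g₁, g₂, rfl⟩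
      exact ⟨hc g₁ g₂, hcp g₁ g₂⟩
    exact fun t ht => hle ht
  obtain ⟨g, hg⟩ := hcyc.exists_generator
  set c : T := (g : T) with hcdef
  have hcT : c ∈ commutator T := g.2
  have hzc : commutator T = Subgroup.zpowers c := by
    refine le_antisymm ?_ (zpowers_le.mpr hcT)
    intro t ht
    obtain ⟨k, hk⟩ := Subgroup.mem_zpowers_iff.mp (hg ⟨t, ht⟩)
    refine Subgroup.mem_zpowers_iff.mpr ⟨k, ?_⟩
    have h' := congrArg Subtype.val hk
    push_cast at h'
    exact h'
  have hnab : ∃ x y : T, ⁅x, y⁆ ≠ 1 := by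
    obtain ⟨t, -, htZ⟩ := SetLike.exists_of_lt hZ
    rw [Subgroup.mem_center_iff] at htZ
    push_neg at htZ
    obtain ⟨w, hw⟩ := htZ
    exact ⟨w, t, fun h => hw (commutatorElement_eq_one_iff_commute.mp h)⟩
  have hcne : c ≠ 1 := by
    intro h
    obtain ⟨x, y, hxy⟩ := hnab
    apply hxy
    have hmem : ⁅x, y⁆ ∈ Subgroup.zpowers c := hzc ▸ mem_commutator_of x y
    rw [h, Subgroup.zpowers_one_eq_bot] at hmem
    exact Subgroup.mem_bot.mp hmem
  have hcp1 : c ^ p = 1 := (hexpcomm c hcT).2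
  have hordc : orderOf c = p := by
    rcases hp.eq_one_or_self_of_dvd _ (orderOf_dvd_of_pow_eq_one hcp1) with h | h
    · exact absurd (orderOf_eq_one_iff.mp h) hcne
    · exact h
  have hcZ : c ∈ Subgroup.center T := (hexpcomm c hcT).1
  have hcard : Nat.card ↥(commutator T) = p := by rw [hzc, Nat.card_zpowers, hordc]
  have hpow : ∀ x : T, x ^ p ∈ Subgroup.zpowers c := by
    intro x
    rw [← hzc]
    let f : T →* Abelianization T := (powMonoidHom p).comp Abelianization.of
    have htop : (⊤ : Subgroup T) ≤ f.ker := by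
      rw [← homega, Omega1]
      refine (Subgroup.closure_le _).mpr ?_
      intro s hs
      have hs' : orderOf s = p := hs
      rw [SetLike.mem_coe, MonoidHom.mem_ker]
      show (Abelianization.of s) ^ p = 1
      have h1 : s ^ p = 1 := by rw [← hs']; exact pow_orderOf_eq_one s
      rw [← map_pow, h1, map_one]
    have hofx : Abelianization.of (x ^ p) = 1 := by
      have hx := htop (Subgroup.mem_top x)
      rw [MonoidHom.mem_ker] at hx
      rw [map_pow]
      exact hx
    exact (QuotientGroup.eq_one_iff _).mp hofx
  obtain ⟨E, hE, hsup⟩ := centerExtraspecialAux (Nat.card T) T le_rfl p hp c hcZ hordc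
    (fun x y => hzc ▸ mem_commutator_of x y) hpow hnab
  exact ⟨hcard, E, hE, hsup⟩
end

section
/- Let G be a finite 2-group, c ∈ G an element of order 4, and D a subgroup of G that is an extraspecial 2-group with center Z = ⟨c²⟩, such that c commutes with every element of D, G = ⟨c⟩D, and ⟨c⟩ ∩ D = Z. Then the poset of elementary abelian 2-subgroups A of G with Z < A is order-isomorphic to the poset of abelian subgroups H of D with Z < H (both posets ordered by inclusion). -/
/-!
Since `c` commutes with `D` and `G = ⟨c⟩D`, the element `c` is central and every element of
`G` has the form `cⁱd` with `d ∈ D`. The squares of `D` lie in `Φ(D) = Z(D) = Z` (maximal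
subgroups of a `2`-group have index `2`), so each `d ∈ D` can be corrected by a power of `c`
to an involution `cⁱd`. The correspondence is `A ↦ ⟨c⟩A ∩ D` with inverse `H ↦ Ω₁(⟨c⟩H)`:
an abelian `H ≥ Z` of `D` gives the abelian group `⟨c⟩H`, whose involutions recover `H`
modulo `⟨c⟩`; conversely an elementary abelian `A ≥ Z` is the set of involutions of `⟨c⟩A`,
because the involutions of `⟨c⟩` lie in `Z`. Both maps preserve inclusion, and the Dedekind
law turns the two round trips into `⟨c⟩ ∩ D = Z` and `⟨c⟩D = G`.
-/

open Subgroup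
open scoped Pointwise

section General

variable {G : Type*} [Group G]

/-- Dedekind's modular law. -/
theorem Subgroup.sup_inf_eq_sup_inf_of_le {X Y W : Subgroup G}
    (hXY : ((X ⊔ Y : Subgroup G) : Set G) = X * Y) (hXW : X ≤ W) :
    (X ⊔ Y) ⊓ W = X ⊔ (Y ⊓ W) := by
  refine le_antisymm ?_ (le_inf (sup_le_sup_left inf_le_left X) (sup_le hXW inf_le_right))
  intro x hx
  obtain ⟨hxXY, hxW⟩ := mem_inf.mp hx
  obtain ⟨a, ha, b, hb, rfl⟩ : x ∈ (X : Set G) * Y := hXY ▸ hxXY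
  refine mul_mem_sup ha ⟨hb, ?_⟩
  simpa using mul_mem (inv_mem (hXW ha)) hxW

theorem Subgroup.normal_of_le_center {N : Subgroup G} (hN : N ≤ center G) : N.Normal :=
  ⟨fun n hn g => by rw [mem_center_iff.mp (hN hn) g, mul_inv_cancel_right]; exact hn⟩

theorem Subgroup.commute_of_mem_sup_of_le_center {N H : Subgroup G} (hN : N ≤ center G)
    (hH : ∀ a ∈ H, ∀ b ∈ H, Commute a b) {x y : G} (hx : x ∈ N ⊔ H) (hy : y ∈ N ⊔ H) :
    Commute x y := by
  have := normal_of_le_center hN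
  have central : ∀ z ∈ N, ∀ g, Commute z g := fun z hz g => (mem_center_iff.mp (hN hz) g).symm
  obtain ⟨m, hm, a, ha, rfl⟩ := mem_sup_of_normal_left.mp hx
  obtain ⟨n, hn, b, hb, rfl⟩ := mem_sup_of_normal_left.mp hy
  exact (central m hm _).mul_left ((central n hn a).symm.mul_right (hH a ha b hb))

theorem Subgroup.coe_mem_centralizer_of_mem_center {D : Subgroup G} {x : D}
    (hx : x ∈ center D) : (x : G) ∈ centralizer (D : Set G) :=
  mem_centralizer_iff.mpr fun g hg => congrArg Subtype.val (mem_center_iff.mp hx ⟨g, hg⟩)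

theorem mem_center_of_zpowers_sup_eq_top {c : G} {D : Subgroup G}
    (hcomm : ∀ d ∈ D, Commute c d) (hgen : zpowers c ⊔ D = ⊤) : c ∈ center G := by
  have hle : zpowers c ⊔ D ≤ centralizer {c} :=
    sup_le (zpowers_le.mpr (mem_centralizer_singleton_iff.mpr rfl))
      fun d hd => mem_centralizer_singleton_iff.mpr (hcomm d hd).symm
  rw [hgen, top_le_iff, centralizer_eq_top_iff_subset] at hle
  exact hle rfl

theorem IsPGroup.index_eq_of_isCoatom {p : ℕ} [hp : Fact p.Prime] [Finite G]
    (hG : IsPGroup p G) {K : Subgroup G} (hK : IsCoatom K) : K.index = p := by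
  obtain ⟨n, hn⟩ := IsPGroup.iff_card.mp (hG.to_subgroup K)
  obtain ⟨m, hm⟩ := hG.index K
  have hcard : Nat.card G = p ^ (n + m) := by rw [← K.card_mul_index, hn, hm, pow_add]
  have hinj := Nat.pow_right_injective hp.out.two_le
  have hm0 : m ≠ 0 := by
    rintro rfl
    exact hK.1 (index_eq_one.mp (by rwa [pow_zero] at hm))
  -- if `p ^ 2` divided the index, a subgroup of order `p ^ (n + 1)` above `K` would be proper
  obtain ⟨L, hL, hKL⟩ := Sylow.exists_subgroup_card_pow_succ
    (hcard ▸ pow_dvd_pow p (by omega : n + 1 ≤ n + m)) hn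
  have hKL' : K < L := hKL.lt_of_ne fun h => by
    have := hinj (hn.symm.trans (h ▸ hL))
    omega
  have hm1 : n + 1 = n + m := by
    apply hinj
    simp only [← hL, ← hcard, hK.2 L hKL', card_top]
  rw [hm, show m = 1 by omega, pow_one]

theorem IsPGroup.pow_mem_frattini {p : ℕ} [Fact p.Prime] [Finite G] (hG : IsPGroup p G)
    (x : G) : x ^ p ∈ frattini G := by
  have := hG.isNilpotent
  simp only [frattini, Order.radical, mem_iInf]
  intro K hK
  have := NormalizerCondition.normal_of_coatom K Group.normalizerCondition_of_isNilpotent hK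
  simpa only [hG.index_eq_of_isCoatom hK] using K.pow_index_mem x

theorem IsExtraspecial.pow_mem_center {p : ℕ} [Fact p.Prime] [Finite G]
    (hG : IsExtraspecial p G) (hp : IsPGroup p G) (x : G) : x ^ p ∈ center G :=
  hG.2.2 ▸ hp.pow_mem_frattini x

/-- `Ω₁(K)` in the notation of `p`-group theory. -/
def Subgroup.omegaOne (p : ℕ) (K : Subgroup G) : Subgroup G :=
  closure {x | x ∈ K ∧ x ^ p = 1}

theorem Subgroup.omegaOne_mono (p : ℕ) : Monotone (omegaOne (G := G) p) :=
  fun _ _ h => closure_mono fun _ hx => ⟨h hx.1, hx.2⟩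

theorem Subgroup.omegaOne_le (p : ℕ) (K : Subgroup G) : K.omegaOne p ≤ K :=
  closure_le _ |>.mpr fun _ hx => hx.1

theorem Subgroup.mem_omegaOne_iff {p : ℕ} {K : Subgroup G}
    (hK : ∀ a ∈ K, ∀ b ∈ K, Commute a b) {x : G} : x ∈ K.omegaOne p ↔ x ∈ K ∧ x ^ p = 1 := by
  refine ⟨fun hx => ?_, fun hx => subset_closure hx⟩
  induction hx using closure_induction with
  | mem x hx => exact hx
  | one => exact ⟨K.one_mem, one_pow p⟩
  | mul x y _ _ hx hy =>
    exact ⟨K.mul_mem hx.1 hy.1, by rw [(hK x hx.1 y hy.1).mul_pow, hx.2, hy.2, one_mul]⟩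
  | inv x _ hx => exact ⟨K.inv_mem hx.1, by rw [inv_pow, hx.2, inv_one]⟩

theorem Subgroup.isElementaryAbelian_omegaOne {p : ℕ} {K : Subgroup G}
    (hK : ∀ a ∈ K, ∀ b ∈ K, Commute a b) : IsElementaryAbelian p (K.omegaOne p) :=
  ⟨fun a ha b hb => hK a ((mem_omegaOne_iff hK).mp ha).1 b ((mem_omegaOne_iff hK).mp hb).1,
    fun _ ha => ((mem_omegaOne_iff hK).mp ha).2⟩

theorem mem_zpowers_sq_of_sq_eq_one {c x : G} (hc : orderOf c = 4) (hx : x ∈ zpowers c)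
    (hx2 : x ^ 2 = 1) : x ∈ zpowers (c ^ 2) := by
  obtain ⟨k, rfl⟩ := hx
  have h4 : ((4 : ℕ) : ℤ) ∣ k * 2 := by
    rw [← hc, orderOf_dvd_iff_zpow_eq_one, zpow_mul]
    exact_mod_cast hx2
  obtain ⟨t, rfl⟩ : 2 ∣ k := by omega
  exact ⟨t, by group⟩

theorem exists_zpow_mul_sq_eq_one {c d : G} (hc : c ∈ center G) (hd : d ^ 2 ∈ zpowers (c ^ 2)) :
    ∃ i : ℤ, (c ^ i * d) ^ 2 = 1 := by
  obtain ⟨k, hk⟩ := hd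
  refine ⟨-k, ?_⟩
  have hcd : Commute c d := (mem_center_iff.mp hc d).symm
  rw [(hcd.zpow_left (-k)).mul_pow, ← hk]
  group

end General

section CentralElementOfOrderFour

variable {G : Type*} [Group G] {c : G} {D : Subgroup G}

theorem zpowers_sup_inf_eq_of_le (hc : c ∈ center G) (hint : zpowers c ⊓ D = zpowers (c ^ 2))
    {H : Subgroup G} (hHD : H ≤ D) (hZH : zpowers (c ^ 2) ≤ H) : (zpowers c ⊔ H) ⊓ D = H := by
  have := normal_of_le_center (zpowers_le.mpr hc)
  rw [sup_comm, sup_inf_eq_sup_inf_of_le (mul_normal H _) hHD, hint, sup_eq_left.mpr hZH]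

theorem zpowers_sup_zpowers_sup_inf (hc : c ∈ center G) (hgen : zpowers c ⊔ D = ⊤)
    (A : Subgroup G) : zpowers c ⊔ ((zpowers c ⊔ A) ⊓ D) = zpowers c ⊔ A := by
  have := normal_of_le_center (zpowers_le.mpr hc)
  rw [inf_comm, ← sup_inf_eq_sup_inf_of_le (normal_mul _ D) le_sup_left, hgen, top_inf_eq]

theorem omegaOne_zpowers_sup_eq (hc : c ∈ center G) (hc4 : orderOf c = 4) {A : Subgroup G}
    (hA : IsElementaryAbelian 2 A) (hZA : zpowers (c ^ 2) ≤ A) :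
    omegaOne 2 (zpowers c ⊔ A) = A := by
  have := normal_of_le_center (zpowers_le.mpr hc)
  refine le_antisymm (closure_le _ |>.mpr ?_)
    fun a ha => subset_closure ⟨mem_sup_right ha, hA.2 a ha⟩
  rintro _ ⟨hx, hx2⟩
  obtain ⟨y, hy, a, ha, rfl⟩ := mem_sup_of_normal_left.mp hx
  have hya : Commute y a := (mem_center_iff.mp (zpowers_le.mpr hc hy) a).symm
  have hy2 : y ^ 2 = 1 := by rwa [hya.mul_pow, hA.2 a ha, mul_one] at hx2
  exact mul_mem (hZA (mem_zpowers_sq_of_sq_eq_one hc4 hy hy2)) ha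

theorem zpowers_sup_omegaOne_zpowers_sup (hc : c ∈ center G) {H : Subgroup G}
    (hsq : ∀ h ∈ H, h ^ 2 ∈ zpowers (c ^ 2)) :
    zpowers c ⊔ omegaOne 2 (zpowers c ⊔ H) = zpowers c ⊔ H := by
  refine le_antisymm (sup_le le_sup_left (omegaOne_le 2 _)) (sup_le le_sup_left fun h hh => ?_)
  obtain ⟨i, hi⟩ := exists_zpow_mul_sq_eq_one hc (hsq h hh)
  have hmem : c ^ i * h ∈ omegaOne 2 (zpowers c ⊔ H) :=
    subset_closure ⟨mul_mem_sup (zpow_mem_zpowers c i) hh, hi⟩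
  rw [show h = (c ^ i)⁻¹ * (c ^ i * h) by group]
  exact mul_mem_sup (inv_mem (zpow_mem_zpowers c i)) hmem

theorem zpowers_sq_lt_zpowers_sup_inf (hc : c ∈ center G) (hc4 : orderOf c = 4)
    (hint : zpowers c ⊓ D = zpowers (c ^ 2)) (hgen : zpowers c ⊔ D = ⊤) {A : Subgroup G}
    (hA : IsElementaryAbelian 2 A) (hZA : zpowers (c ^ 2) < A) :
    zpowers (c ^ 2) < (zpowers c ⊔ A) ⊓ D := by
  have hZC : zpowers (c ^ 2) ≤ zpowers c := hint ▸ inf_le_left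
  refine (le_inf (hZC.trans le_sup_left) (hint ▸ inf_le_right)).lt_of_not_ge
    fun hle => hZA.not_ge ?_
  have hAC : A ≤ zpowers c := calc
    A ≤ zpowers c ⊔ A := le_sup_right
    _ = zpowers c ⊔ ((zpowers c ⊔ A) ⊓ D) := (zpowers_sup_zpowers_sup_inf hc hgen A).symm
    _ ≤ zpowers c := sup_le le_rfl (hle.trans hZC)
  exact fun a ha => mem_zpowers_sq_of_sq_eq_one hc4 (hAC ha) (hA.2 a ha)

theorem zpowers_sq_lt_omegaOne_zpowers_sup (hc : c ∈ center G) (hc4 : orderOf c = 4)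
    (hint : zpowers c ⊓ D = zpowers (c ^ 2)) {H : Subgroup G} (hHD : H ≤ D)
    (hsq : ∀ h ∈ H, h ^ 2 ∈ zpowers (c ^ 2)) (hZH : zpowers (c ^ 2) < H) :
    zpowers (c ^ 2) < omegaOne 2 (zpowers c ⊔ H) := by
  have hZC : zpowers (c ^ 2) ≤ zpowers c := hint ▸ inf_le_left
  have hc22 : (c ^ 2) ^ 2 = 1 := by
    rw [← pow_mul, show 2 * 2 = orderOf c by rw [hc4], pow_orderOf_eq_one]
  have hc2 : c ^ 2 ∈ omegaOne 2 (zpowers c ⊔ H) :=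
    subset_closure ⟨mem_sup_left (hZC (mem_zpowers _)), hc22⟩
  refine (zpowers_le.mpr hc2).lt_of_not_ge fun hle => hZH.not_ge ?_
  have hHC : H ≤ zpowers c := calc
    H ≤ zpowers c ⊔ H := le_sup_right
    _ = zpowers c ⊔ omegaOne 2 (zpowers c ⊔ H) := (zpowers_sup_omegaOne_zpowers_sup hc hsq).symm
    _ ≤ zpowers c := sup_le le_rfl (hle.trans hZC)
  exact hint ▸ le_inf hHC hHD

def elementaryAbelianOrderIsoAbelian (hc : c ∈ center G) (hc4 : orderOf c = 4)
    (hint : zpowers c ⊓ D = zpowers (c ^ 2)) (hgen : zpowers c ⊔ D = ⊤)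
    (hsq : ∀ d ∈ D, d ^ 2 ∈ zpowers (c ^ 2)) :
    {A : Subgroup G // IsElementaryAbelian 2 A ∧ zpowers (c ^ 2) < A} ≃o
      {H : Subgroup G // H ≤ D ∧ (∀ a ∈ H, ∀ b ∈ H, Commute a b) ∧ zpowers (c ^ 2) < H} :=
  have hC : zpowers c ≤ center G := zpowers_le.mpr hc
  Equiv.toOrderIso
    { toFun := fun A => ⟨(zpowers c ⊔ A) ⊓ D, inf_le_right,
        fun _ ha _ hb => commute_of_mem_sup_of_le_center hC A.2.1.1 ha.1 hb.1,
        zpowers_sq_lt_zpowers_sup_inf hc hc4 hint hgen A.2.1 A.2.2⟩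
      invFun := fun H => ⟨omegaOne 2 (zpowers c ⊔ H),
        isElementaryAbelian_omegaOne fun _ ha _ hb =>
          commute_of_mem_sup_of_le_center hC H.2.2.1 ha hb,
        zpowers_sq_lt_omegaOne_zpowers_sup hc hc4 hint H.2.1 (fun h hh => hsq h (H.2.1 hh))
          H.2.2.2⟩
      left_inv := fun A => Subtype.ext <|
        (congrArg (omegaOne 2) (zpowers_sup_zpowers_sup_inf hc hgen A)).trans
          (omegaOne_zpowers_sup_eq hc hc4 A.2.1 A.2.2.le)
      right_inv := fun H => Subtype.ext <|
        (congrArg (· ⊓ D) <| zpowers_sup_omegaOne_zpowers_sup hc fun h hh => hsq h (H.2.1 hh)).trans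
          (zpowers_sup_inf_eq_of_le hc hint H.2.1 H.2.2.2.le) }
    (fun _ _ h => inf_le_inf_right D (sup_le_sup_left h _))
    (fun _ _ h => omegaOne_mono 2 (sup_le_sup_left h _))

end CentralElementOfOrderFour

theorem central_product_upper_interval_iso_abelian_poset
    (G : Type*) [Group G] [Finite G] (hG : IsPGroup 2 G)
    (c : G) (hc : orderOf c = 4)
    (D : Subgroup G) (hD : IsExtraspecial 2 ↥D)
    (hZD : Subgroup.centralizer (D : Set G) ⊓ D = Subgroup.zpowers (c ^ 2))
    (hcomm : ∀ d ∈ D, Commute c d)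
    (hgen : Subgroup.zpowers c ⊔ D = ⊤)
    (hint : Subgroup.zpowers c ⊓ D = Subgroup.zpowers (c ^ 2)) :
    Nonempty
      ({A : Subgroup G // IsElementaryAbelian 2 A ∧ Subgroup.zpowers (c ^ 2) < A} ≃o
       {H : Subgroup G // H ≤ D ∧ (∀ a ∈ H, ∀ b ∈ H, Commute a b) ∧
          Subgroup.zpowers (c ^ 2) < H}) := by
  have hsq : ∀ d ∈ D, d ^ 2 ∈ zpowers (c ^ 2) := fun d hd =>
    hZD ▸ ⟨coe_mem_centralizer_of_mem_center (hD.pow_mem_center (hG.to_subgroup D) ⟨d, hd⟩),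
      pow_mem hd 2⟩
  exact ⟨elementaryAbelianOrderIsoAbelian (mem_center_of_zpowers_sup_eq_top hcomm hgen) hc hint
    hgen hsq⟩
end
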